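/- arXiv:1201.1832 — 8 statements merged into one kernel-verified Lean document; each statement's English description precedes it below -/
import Mathlib

section
/- Let L and M be Euclidean lattices (full-rank lattices in Euclidean spaces) of rank ℓ ≥ 2 and m ≥ 2 respectively. If every minimal vector of the tensor product lattice L ⊗_ℤ M (with inner product (x⊗y)·(z⊗t) = (x·z)(y·t)) is split, i.e. of the form x ⊗ y with x ∈ L and y ∈ M, then L ⊗_ℤ M is not perfect. -/
/-!
If `z = x ⊗ y` then `z zᵗ = (x xᵗ) ⊗ (y yᵗ)` is symmetric in the two `ι`-indices and, separately,
in the two `κ`-indices. Such "doubly symmetric" matrices are determined by their values on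
`Sym2 ι × Sym2 κ`, so when all minimal vectors are split the rank of perfection is at most
`ℓ(ℓ+1)/2 · m(m+1)/2`, which is smaller than `ℓm(ℓm+1)/2` as soon as `ℓ, m ≥ 2`.
-/

open Matrix
open scoped Kronecker

namespace Matrix

variable {ι κ R : Type*}

variable (ι κ R) in
def doublySymmetric [Semiring R] : Submodule R (Matrix (ι × κ) (ι × κ) R) where
  carrier := {M | ∀ i i' j j', M (i, j) (i', j') = M (i', j) (i, j') ∧
    M (i, j) (i', j') = M (i, j') (i', j)}
  add_mem' ha hb i i' j j' :=
    ⟨by simp only [add_apply, (ha i i' j j').1, (hb i i' j j').1],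
      by simp only [add_apply, (ha i i' j j').2, (hb i i' j j').2]⟩
  zero_mem' := by simp
  smul_mem' c M hM i i' j j' :=
    ⟨by simp only [smul_apply, (hM i i' j j').1], by simp only [smul_apply, (hM i i' j j').2]⟩

theorem doublySymmetric_apply_eq_of_sym2_eq [Semiring R] {M : Matrix (ι × κ) (ι × κ) R}
    (hM : M ∈ doublySymmetric ι κ R) {i i' k k' : ι} {j j' l l' : κ}
    (hι : s(i, i') = s(k, k')) (hκ : s(j, j') = s(l, l')) :
    M (i, j) (i', j') = M (k, l) (k', l') := by
  rcases Sym2.eq_iff.mp hι with ⟨rfl, rfl⟩ | ⟨rfl, rfl⟩ <;>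
    rcases Sym2.eq_iff.mp hκ with ⟨rfl, rfl⟩ | ⟨rfl, rfl⟩
  · rfl
  · exact (hM _ _ _ _).2
  · exact (hM _ _ _ _).1
  · rw [(hM _ _ _ _).1, (hM _ _ _ _).2]

variable (ι κ R) in
noncomputable def restrictSym2 [Semiring R] :
    Matrix (ι × κ) (ι × κ) R →ₗ[R] Sym2 ι × Sym2 κ → R where
  toFun M st := M (st.1.out.1, st.2.out.1) (st.1.out.2, st.2.out.2)
  map_add' _ _ := rfl
  map_smul' _ _ := rfl

@[simp]
theorem restrictSym2_apply [Semiring R] (M : Matrix (ι × κ) (ι × κ) R) (st : Sym2 ι × Sym2 κ) :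
    restrictSym2 ι κ R M st = M (st.1.out.1, st.2.out.1) (st.1.out.2, st.2.out.2) :=
  rfl

theorem injective_restrictSym2_comp_subtype [Semiring R] :
    Function.Injective ((restrictSym2 ι κ R).comp (doublySymmetric ι κ R).subtype) := by
  rintro ⟨M, hM⟩ ⟨N, hN⟩ hMN
  refine Subtype.ext (show M = N from ext fun ⟨i, j⟩ ⟨i', j'⟩ => ?_)
  have h := congrFun hMN (s(i, i'), s(j, j'))
  simp only [LinearMap.comp_apply, Submodule.subtype_apply, restrictSym2_apply] at h
  have hι : s(i, i') = s(s(i, i').out.1, s(i, i').out.2) := (Quot.out_eq _).symm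
  have hκ : s(j, j') = s(s(j, j').out.1, s(j, j').out.2) := (Quot.out_eq _).symm
  exact (doublySymmetric_apply_eq_of_sym2_eq hM hι hκ).trans
    (h.trans (doublySymmetric_apply_eq_of_sym2_eq hN hι hκ).symm)

theorem finrank_doublySymmetric_le [Fintype ι] [Fintype κ] [Field R] :
    Module.finrank R (doublySymmetric ι κ R) ≤
      Fintype.card (Sym2 ι) * Fintype.card (Sym2 κ) := by
  rw [← Fintype.card_prod, ← Module.finrank_fintype_fun_eq_card R]
  exact LinearMap.finrank_le_finrank_of_injective injective_restrictSym2_comp_subtype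

theorem vecMulVec_mem_doublySymmetric [CommSemiring R] {z : ι × κ → R} {x : ι → R} {y : κ → R}
    (hz : ∀ i j, z (i, j) = x i * y j) : vecMulVec z z ∈ doublySymmetric ι κ R := by
  intro i i' j j'
  simp only [vecMulVec_apply, hz]
  constructor <;> ring

end Matrix

theorem Nat.choose_two_mul_choose_two_lt {a b : ℕ} (ha : 2 ≤ a) (hb : 2 ≤ b) :
    (a + 1).choose 2 * (b + 1).choose 2 < (a * b + 1).choose 2 := by
  qify
  simp only [Nat.cast_choose_two, Nat.cast_add, Nat.cast_mul, Nat.cast_one, add_sub_cancel_right]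
  have ha' : (2 : ℚ) ≤ a := by exact_mod_cast ha
  have hb' : (2 : ℚ) ≤ b := by exact_mod_cast hb
  have hab : (0 : ℚ) < (a - 1) * (b - 1) * (a * b) := by
    have := mul_pos (by linarith : (0 : ℚ) < a - 1) (by linarith : (0 : ℚ) < b - 1)
    positivity
  nlinarith

theorem stmt0_general (ℓ m : ℕ) (hl : 2 ≤ ℓ) (hm : 2 ≤ m)
    (minVecs : Set (Fin ℓ × Fin m → ℤ))
    (hsplit : ∀ Z ∈ minVecs, ∃ (X : Fin ℓ → ℤ) (Y : Fin m → ℤ),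
      ∀ i j, Z (i, j) = X i * Y j) :
    Module.finrank ℝ (Submodule.span ℝ
      {A : Matrix (Fin ℓ × Fin m) (Fin ℓ × Fin m) ℝ |
        ∃ Z ∈ minVecs, A = fun p q => (Z p : ℝ) * (Z q : ℝ)}) ≠
      (ℓ * m) * (ℓ * m + 1) / 2 := by
  have hspan : Submodule.span ℝ {A : Matrix (Fin ℓ × Fin m) (Fin ℓ × Fin m) ℝ |
      ∃ Z ∈ minVecs, A = fun p q => (Z p : ℝ) * (Z q : ℝ)} ≤ doublySymmetric (Fin ℓ) (Fin m) ℝ := by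
    rw [Submodule.span_le]
    rintro _ ⟨Z, hZ, rfl⟩
    obtain ⟨X, Y, hXY⟩ := hsplit Z hZ
    exact vecMulVec_mem_doublySymmetric (x := fun i => (X i : ℝ)) (y := fun j => (Y j : ℝ))
      (by exact_mod_cast hXY)
  refine ne_of_lt ?_
  calc _ ≤ Module.finrank ℝ (doublySymmetric (Fin ℓ) (Fin m) ℝ) := Submodule.finrank_mono hspan
    _ ≤ Fintype.card (Sym2 (Fin ℓ)) * Fintype.card (Sym2 (Fin m)) := finrank_doublySymmetric_le
    _ = (ℓ + 1).choose 2 * (m + 1).choose 2 := by simp only [Sym2.card, Fintype.card_fin]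
    _ < (ℓ * m + 1).choose 2 := Nat.choose_two_mul_choose_two_lt hl hm
    _ = ℓ * m * (ℓ * m + 1) / 2 := by rw [Nat.choose_two_right, Nat.add_sub_cancel, Nat.mul_comm]

/-- Two Euclidean lattices of ranks ℓ, m ≥ 2 are given by positive definite Gram
matrices `G`, `H` of their bases; their tensor product has Gram matrix the
Kronecker product `G ⊗ₖ H`.  Minimal vectors are nonzero integral coordinate
vectors of least squared length.  If every minimal vector `Z` of the tensor
product is split, i.e. `Z (i,j) = X i * Y j` for integral vectors `X`, `Y`, then
the tensor product is not perfect: the real span of the projection matrices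
`Z Zᵗ`, for `Z` minimal, has dimension different from `ℓm(ℓm+1)/2`. -/
theorem stmt0 (ℓ m : ℕ) (hl : 2 ≤ ℓ) (hm : 2 ≤ m)
    (G : Matrix (Fin ℓ) (Fin ℓ) ℝ) (H : Matrix (Fin m) (Fin m) ℝ)
    (hG : G.PosDef) (hH : H.PosDef)
    (minVecs : Set (Fin ℓ × Fin m → ℤ))
    (hminVecs : minVecs = {Z | Z ≠ 0 ∧ ∀ W : Fin ℓ × Fin m → ℤ, W ≠ 0 →
      (fun p => (Z p : ℝ)) ⬝ᵥ (G ⊗ₖ H).mulVec (fun p => (Z p : ℝ)) ≤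
        (fun p => (W p : ℝ)) ⬝ᵥ (G ⊗ₖ H).mulVec (fun p => (W p : ℝ))})
    (hsplit : ∀ Z ∈ minVecs, ∃ (X : Fin ℓ → ℤ) (Y : Fin m → ℤ),
      ∀ i j, Z (i, j) = X i * Y j) :
    Module.finrank ℝ (Submodule.span ℝ
      {A : Matrix (Fin ℓ × Fin m) (Fin ℓ × Fin m) ℝ |
        ∃ Z ∈ minVecs, A = fun p q => (Z p : ℝ) * (Z q : ℝ)}) ≠
      (ℓ * m) * (ℓ * m + 1) / 2 :=
  stmt0_general ℓ m hl hm minVecs hsplit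
end

section
/- Let K be an imaginary quadratic field with ring of integers O_K having Euclidean minimum μ(O_K) = μ < 1, and let L be a Hermitian O_K-lattice of rank 2 with positive definite Hermitian form h and Hermitian minimum m = min{h(v,v) : v ∈ L, v ≠ 0}. Then the discriminant d_L of L satisfies d_L ≥ m²(1 − μ). -/
/-!
Choose a vector `v` of minimal norm `h(v, v) = m`. Since `μ < 1`, `O_K` is Euclidean for the
norm, hence a PID, so `v = d • c` with `d` a gcd of its coordinates; minimality forces
`|d|² ≤ 1`, and a Bézout relation gives `u` with `0 < |det(v, u)|² ≤ 1`. For `c ∈ O_K` the Gram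
determinant of `(v, u - c v)` gives
`m · h(u - c v, u - c v) = |det(v, u)|² · d_L + m² · N(x - c)` with `x = h(v, u) / m ∈ K`,
and the left side is at least `m²`. Hence `m² - d_L ≤ m² · N(x - c)` for all `c`, and taking
the infimum over `c` yields `m² - d_L ≤ m² μ`.
-/

open Matrix Complex
open scoped ComplexOrder
open ComplexConjugate

theorem isPrincipalIdealRing_of_exists_lt {R : Type*} [CommRing R] (N : R → ℕ)
    (h : ∀ a b : R, b ≠ 0 → ∃ c, N (a - c * b) < N b) : IsPrincipalIdealRing R where
  principal I := by
    classical
    by_cases hI : I = ⊥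
    · exact hI ▸ bot_isPrincipal
    obtain ⟨x, hxI, hx0⟩ := Submodule.exists_mem_ne_zero_of_ne_bot hI
    have hex : ∃ n, ∃ d ∈ I, d ≠ 0 ∧ N d = n := ⟨_, x, hxI, hx0, rfl⟩
    obtain ⟨d, hdI, hd0, hdN⟩ := Nat.find_spec hex
    refine ⟨d, le_antisymm (fun y hy => ?_) ((Ideal.span_singleton_le_iff_mem I).2 hdI)⟩
    obtain ⟨c, hc⟩ := h y d hd0
    have hrem : y - c * d = 0 := by
      by_contra hne
      exact (Nat.find_min' hex ⟨_, I.sub_mem hy (I.mul_mem_left c hdI), hne, rfl⟩).not_gt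
        (hdN ▸ hc)
    exact Ideal.mem_span_singleton'.2 ⟨c, (sub_eq_zero.1 hrem).symm⟩

theorem Subring.isPrincipalIdealRing_of_normSq {R : Subring ℂ}
    (hnat : ∀ z ∈ R, ∃ n : ℕ, normSq z = n)
    (hdiv : ∀ a ∈ R, ∀ b ∈ R, ∃ c ∈ R, normSq (a / b - c) < 1) : IsPrincipalIdealRing R := by
  refine isPrincipalIdealRing_of_exists_lt (fun z : R => ⌊normSq (z : ℂ)⌋₊) fun a b hb => ?_
  obtain ⟨c, hc, hlt⟩ := hdiv a a.2 b b.2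
  refine ⟨⟨c, hc⟩, ?_⟩
  have hb' : (b : ℂ) ≠ 0 := by exact_mod_cast hb
  have hlt' : normSq ((a : ℂ) - c * b) < normSq (b : ℂ) := by
    rw [show (a : ℂ) - c * b = (a / b - c) * b by field_simp, normSq_mul]
    nlinarith [normSq_pos.2 hb']
  obtain ⟨n₁, h₁⟩ := hnat _ (a - ⟨c, hc⟩ * b).2
  obtain ⟨n₂, h₂⟩ := hnat _ b.2
  simp only [AddSubgroupClass.coe_sub, MulMemClass.coe_mul] at h₁ ⊢
  rw [h₁, h₂, Nat.floor_natCast, Nat.floor_natCast]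
  exact_mod_cast h₁ ▸ h₂ ▸ hlt'

theorem iInf_le_iSup_iInf_of_bounded {α β : Type*} {f : α → β → ℝ} (hf : ∀ a b, 0 ≤ f a b)
    {C : ℝ} (hC : ∀ a, ∃ b, f a b ≤ C) (a : α) : ⨅ b, f a b ≤ ⨆ a, ⨅ b, f a b := by
  have hbdd : ∀ a, BddBelow (Set.range (f a)) := fun a => ⟨0, by rintro _ ⟨b, rfl⟩; exact hf a b⟩
  refine le_ciSup (f := fun a => ⨅ b, f a b) ⟨C, ?_⟩ a
  rintro _ ⟨a, rfl⟩
  obtain ⟨b, hb⟩ := hC a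
  exact (ciInf_le (hbdd a) b).trans hb

theorem Matrix.IsHermitian.star_dotProduct_mulVec {n R : Type*} [Fintype n] [CommRing R]
    [StarRing R] {A : Matrix n n R} (hA : A.IsHermitian) (v w : n → R) :
    star (star v ⬝ᵥ A *ᵥ w) = star w ⬝ᵥ A *ᵥ v := by
  rw [star_dotProduct, star_star, star_mulVec, ← dotProduct_mulVec, hA.eq]

theorem Matrix.gram_det_fin_two {R : Type*} [CommRing R] [StarRing R]
    (A : Matrix (Fin 2) (Fin 2) R) (v w : Fin 2 → R) :
    (star v ⬝ᵥ A *ᵥ v) * (star w ⬝ᵥ A *ᵥ w) - (star v ⬝ᵥ A *ᵥ w) * (star w ⬝ᵥ A *ᵥ v) =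
      star (v 0 * w 1 - v 1 * w 0) * (v 0 * w 1 - v 1 * w 0) * A.det := by
  simp only [dotProduct, mulVec, Fin.sum_univ_two, det_fin_two, Pi.star_apply, star_sub,
    star_mul']
  ring

theorem Matrix.IsHermitian.re_mul_re_fin_two {A : Matrix (Fin 2) (Fin 2) ℂ} (hA : A.IsHermitian)
    (v w : Fin 2 → ℂ) :
    (star v ⬝ᵥ A *ᵥ v).re * (star w ⬝ᵥ A *ᵥ w).re =
      normSq (v 0 * w 1 - v 1 * w 0) * A.det.re + normSq (star v ⬝ᵥ A *ᵥ w) := by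
  have h := congrArg re (gram_det_fin_two A v w)
  have hv : (star v ⬝ᵥ A *ᵥ v).im = 0 := hA.im_star_dotProduct_mulVec_self v
  rw [← hA.star_dotProduct_mulVec v w, star_def, mul_conj, mul_comm (starRingEnd ℂ _), mul_conj,
    sub_re, mul_re, hv, mul_re, ofReal_re, ofReal_im, ofReal_re] at h
  linarith

theorem Matrix.re_star_smul_dotProduct_mulVec_smul (A : Matrix (Fin 2) (Fin 2) ℂ) (d : ℂ)
    (v : Fin 2 → ℂ) :
    (star (d • v) ⬝ᵥ A *ᵥ (d • v)).re = normSq d * (star v ⬝ᵥ A *ᵥ v).re := by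
  rw [star_smul, mulVec_smul, dotProduct_smul, smul_dotProduct, smul_smul, smul_eq_mul, star_def,
    mul_conj, re_ofReal_mul]

theorem Subfield.star_dotProduct_mulVec_mem {n : Type*} [Fintype n] {K : Subfield ℂ}
    (hK : ∀ z ∈ K, conj z ∈ K) {A : Matrix n n ℂ} (hA : ∀ i j, A i j ∈ K) {v u : n → ℂ}
    (hv : ∀ i, v i ∈ K) (hu : ∀ i, u i ∈ K) : star v ⬝ᵥ A *ᵥ u ∈ K :=
  sum_mem fun i _ => mul_mem (hK _ (hv i)) (sum_mem fun j _ => mul_mem (hA i j) (hu j))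

def hermitianValues (R : Subring ℂ) (G : Matrix (Fin 2) (Fin 2) ℂ) : Set ℝ :=
  {x | ∃ v : Fin 2 → ℂ, (∀ i, v i ∈ R) ∧ v ≠ 0 ∧ (star v ⬝ᵥ G *ᵥ v).re = x}

section HermitianMinimum

variable {R : Subring ℂ} {G : Matrix (Fin 2) (Fin 2) ℂ} {m : ℝ}

theorem pos_of_isLeast_hermitianValues (hG : G.PosDef) (hm : IsLeast (hermitianValues R G) m) :
    0 < m :=
  let ⟨_, _, hv0, hvm⟩ := hm.1
  hvm ▸ hG.re_dotProduct_pos hv0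

theorem exists_normSq_det_le_one_of_isLeast [IsBezout R] (hG : G.PosDef)
    (hm : IsLeast (hermitianValues R G) m) :
    ∃ v u : Fin 2 → ℂ, (∀ i, v i ∈ R) ∧ (∀ i, u i ∈ R) ∧ (star v ⬝ᵥ G *ᵥ v).re = m ∧
      v 0 * u 1 - v 1 * u 0 ≠ 0 ∧ normSq (v 0 * u 1 - v 1 * u 0) ≤ 1 := by
  obtain ⟨v, hvR, hv0, hvm⟩ := hm.1
  set a : R := ⟨v 0, hvR 0⟩
  set b : R := ⟨v 1, hvR 1⟩
  set d := IsBezout.gcd a b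
  obtain ⟨s, t, hst⟩ := IsBezout.gcd_eq_sum a b
  obtain ⟨e, he⟩ := IsBezout.gcd_dvd_left a b
  obtain ⟨f, hf⟩ := IsBezout.gcd_dvd_right a b
  set c : Fin 2 → ℂ := ![e, f]
  have hvc : v = (d : ℂ) • c := by
    ext i; fin_cases i
    · simpa [c] using congrArg Subtype.val he
    · simpa [c] using congrArg Subtype.val hf
  have hc0 : c ≠ 0 := by rintro hc; exact hv0 (by rw [hvc, hc, smul_zero])
  have hd0 : (d : ℂ) ≠ 0 := by rintro hd; exact hv0 (by rw [hvc, hd, zero_smul])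
  have hmc : m ≤ (star c ⬝ᵥ G *ᵥ c).re :=
    hm.2 ⟨c, fun i => by fin_cases i <;> simp [c], hc0, rfl⟩
  have hdm : normSq d * (star c ⬝ᵥ G *ᵥ c).re = m := by
    rw [← re_star_smul_dotProduct_mulVec_smul, ← hvc, hvm]
  have hdet : v 0 * (s : ℂ) - v 1 * (-(t : ℂ)) = d := by
    simp only [d, ← hst, Subring.coe_add, Subring.coe_mul]; ring
  refine ⟨v, ![-(t : ℂ), s], hvR, fun i => ?_, hvm, ?_, ?_⟩
  · fin_cases i <;> simp
  all_goals simp only [Matrix.cons_val_zero, Matrix.cons_val_one, hdet]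
  · exact hd0
  · nlinarith [normSq_nonneg (d : ℂ), pos_of_isLeast_hermitianValues hG hm]

theorem sq_sub_det_le_of_isLeast (hG : G.PosDef) (hm : IsLeast (hermitianValues R G) m)
    {v u : Fin 2 → ℂ} (hvR : ∀ i, v i ∈ R) (huR : ∀ i, u i ∈ R)
    (hvm : (star v ⬝ᵥ G *ᵥ v).re = m) (hD0 : v 0 * u 1 - v 1 * u 0 ≠ 0)
    (hD1 : normSq (v 0 * u 1 - v 1 * u 0) ≤ 1) {c : ℂ} (hc : c ∈ R) :
    m ^ 2 - G.det.re ≤ m ^ 2 * normSq (star v ⬝ᵥ G *ᵥ u / (star v ⬝ᵥ G *ᵥ v) - c) := by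
  set w := u - c • v
  have hD : v 0 * w 1 - v 1 * w 0 = v 0 * u 1 - v 1 * u 0 := by
    simp only [w, Pi.sub_apply, Pi.smul_apply, smul_eq_mul]; ring
  have hw0 : w ≠ 0 := by rintro hw; simp [hw] at hD; exact hD0 hD.symm
  have hmw : m ≤ (star w ⬝ᵥ G *ᵥ w).re :=
    hm.2 ⟨w, fun i => R.sub_mem (huR i) (R.mul_mem hc (hvR i)), hw0, rfl⟩
  have hm0 := pos_of_isLeast_hermitianValues hG hm
  have hm0' : (m : ℂ) ≠ 0 := ofReal_ne_zero.2 hm0.ne'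
  have hdet : 0 < G.det.re := (Complex.lt_def.1 hG.det_pos).1
  have hvv : star v ⬝ᵥ G *ᵥ v = m :=
    Complex.ext (by rw [hvm, ofReal_re]) (hG.1.im_star_dotProduct_mulVec_self v)
  rw [hvv]
  have hvw : star v ⬝ᵥ G *ᵥ w = (star v ⬝ᵥ G *ᵥ u / m - c) * m := by
    rw [mulVec_sub, dotProduct_sub, mulVec_smul, dotProduct_smul, hvv, smul_eq_mul,
      div_sub' hm0', div_mul_cancel₀ _ hm0', mul_comm c]
  have key := hG.1.re_mul_re_fin_two v w
  rw [hD, hvw, normSq_mul, normSq_ofReal, hvm] at key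
  nlinarith [normSq_nonneg (v 0 * u 1 - v 1 * u 0), normSq_nonneg (star v ⬝ᵥ G *ᵥ u / m - c)]

end HermitianMinimum

def Subfield.integers (K : Subfield ℂ) : Subring ℂ :=
  K.toSubring ⊓ (integralClosure ℤ ℂ).toSubring

theorem Subfield.mem_integers {K : Subfield ℂ} {z : ℂ} :
    z ∈ K.integers ↔ z ∈ K ∧ IsIntegral ℤ z := Iff.rfl

theorem Subfield.exists_eq_add_mul_of_finrank_eq_two {K : Subfield ℂ}
    (hdeg : Module.finrank ℚ K = 2) (himag : ¬ (K : Set ℂ) ⊆ Set.range ofReal) :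
    ∃ w ∈ K, w.im ≠ 0 ∧ ∀ z ∈ K, ∃ p q : ℚ, z = p + q * w := by
  obtain ⟨w, hwK, hw⟩ := Set.not_subset.1 himag
  have hwim : w.im ≠ 0 := fun h => hw ⟨w.re, Complex.ext rfl h.symm⟩
  have hli : LinearIndependent ℚ ![1, (⟨w, hwK⟩ : K)] := by
    rw [LinearIndependent.pair_iff]
    intro p q h
    have hq : q = 0 := by simpa [Rat.smul_def, hwim] using congrArg (fun z : K => (z : ℂ).im) h
    subst hq
    simpa using h
  have hspan := hli.span_eq_top_of_card_eq_finrank (by simp [hdeg])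
  refine ⟨w, hwK, hwim, fun z hz => ?_⟩
  have hz' : (⟨z, hz⟩ : K) ∈ Submodule.span ℚ (Set.range ![1, ⟨w, hwK⟩]) := hspan ▸ trivial
  rw [Matrix.range_cons_cons_empty, Submodule.mem_span_pair] at hz'
  obtain ⟨p, q, h⟩ := hz'
  exact ⟨p, q, by simpa [Rat.smul_def] using (congrArg Subtype.val h).symm⟩

section QuadraticSubfield

variable {K : Subfield ℂ} {w : ℂ}

theorem conj_mem_of_forall_eq_add_mul (hwK : w ∈ K) (hwim : w.im ≠ 0)
    (hspan : ∀ z ∈ K, ∃ p q : ℚ, z = p + q * w) {z : ℂ} (hz : z ∈ K) : conj z ∈ K := by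
  obtain ⟨a, b, hab⟩ := hspan _ (pow_mem hwK 2)
  have hb : (b : ℝ) = 2 * w.re := by
    have him := congrArg im hab
    simp only [sq, mul_im, add_im, ratCast_im, ratCast_re, zero_mul, zero_add] at him
    exact mul_right_cancel₀ hwim (by linarith)
  have hconj : conj w = b - w := Complex.ext (by simp [hb]; ring) (by simp)
  obtain ⟨p, q, rfl⟩ := hspan z hz
  simp only [map_add, map_mul, map_ratCast, hconj]
  exact add_mem (SubfieldClass.ratCast_mem K p)
    (mul_mem (SubfieldClass.ratCast_mem K q) (sub_mem (SubfieldClass.ratCast_mem K b) hwK))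

theorem exists_eq_ratCast_of_im_eq_zero (hwim : w.im ≠ 0)
    (hspan : ∀ z ∈ K, ∃ p q : ℚ, z = p + q * w) {z : ℂ} (hz : z ∈ K) (him : z.im = 0) :
    ∃ p : ℚ, z = p := by
  obtain ⟨p, q, rfl⟩ := hspan z hz
  have hq : q = 0 := by simpa [hwim] using him
  exact ⟨p, by simp [hq]⟩

theorem exists_normSq_eq_natCast (hwK : w ∈ K) (hwim : w.im ≠ 0)
    (hspan : ∀ z ∈ K, ∃ p q : ℚ, z = p + q * w) {z : ℂ} (hz : z ∈ K.integers) :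
    ∃ n : ℕ, normSq z = n := by
  obtain ⟨hzK, hzint⟩ := Subfield.mem_integers.1 hz
  obtain ⟨p, hp⟩ := exists_eq_ratCast_of_im_eq_zero hwim hspan
    (mul_mem hzK (conj_mem_of_forall_eq_add_mul hwK hwim hspan hzK)) (by rw [mul_conj]; simp)
  have hpint : IsIntegral ℤ p := by
    rw [← isIntegral_algebraMap_iff (B := ℂ) (algebraMap ℚ ℂ).injective, eq_ratCast, ← hp]
    exact hzint.mul (hzint.map (starRingEnd ℂ).toIntAlgHom)
  obtain ⟨n, rfl⟩ := IsIntegrallyClosed.isIntegral_iff.1 hpint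
  have hn : normSq z = n := by exact_mod_cast (mul_conj z).symm.trans hp
  lift n to ℕ using by exact_mod_cast hn ▸ normSq_nonneg z
  exact ⟨n, by exact_mod_cast hn⟩

theorem norm_ratCast_sub_round_le (r : ℚ) : ‖((r - round r : ℚ) : ℂ)‖ ≤ 1 / 2 := by
  rw [norm_ratCast, Rat.cast_sub, Rat.cast_intCast, ← Rat.round_cast (α := ℝ)]
  exact abs_sub_round (r : ℝ)

-- Without this bound the `⨆` defining `μ` would be the junk value `0`.
theorem exists_forall_normSq_sub_le [FiniteDimensional ℚ K] (hwK : w ∈ K)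
    (hspan : ∀ z ∈ K, ∃ p q : ℚ, z = p + q * w) :
    ∃ C, ∀ x ∈ K, ∃ c ∈ K.integers, normSq (x - c) ≤ C := by
  have hw : IsAlgebraic ℤ w := (IsFractionRing.isAlgebraic_iff ℤ ℚ ℂ).2
    (IsAlgebraic.of_finite ℚ (⟨w, hwK⟩ : K)).algebraMap
  obtain ⟨y, hy0, hyint⟩ := hw.exists_integral_multiple
  rw [zsmul_eq_mul] at hyint
  set ω := (y : ℂ) * w
  refine ⟨(1 + ‖ω‖) ^ 2, fun x hx => ?_⟩
  obtain ⟨p, q, rfl⟩ := hspan x hx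
  set r := q / y
  refine ⟨round p + round r * ω, Subfield.mem_integers.2 ⟨?_, ?_⟩, ?_⟩
  · exact add_mem (intCast_mem K _) (mul_mem (intCast_mem K _) (mul_mem (intCast_mem K _) hwK))
  · exact isIntegral_algebraMap.add (isIntegral_algebraMap.mul hyint)
  have hx : (p : ℂ) + q * w - (round p + round r * ω) =
      ((p - round p : ℚ) : ℂ) + ((r - round r : ℚ) : ℂ) * ω := by
    have : (y : ℂ) ≠ 0 := Int.cast_ne_zero.2 hy0
    simp only [ω, r]; push_cast; field_simp; ring
  rw [normSq_eq_norm_sq, hx]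
  gcongr
  calc _ ≤ ‖((p - round p : ℚ) : ℂ)‖ + ‖((r - round r : ℚ) : ℂ)‖ * ‖ω‖ :=
        (norm_add_le _ _).trans_eq (by rw [norm_mul])
    _ ≤ 1 / 2 + 1 / 2 * ‖ω‖ := by gcongr <;> exact norm_ratCast_sub_round_le _
    _ ≤ 1 + ‖ω‖ := by linarith [norm_nonneg ω]

end QuadraticSubfield

/-- Let K be an imaginary quadratic field, realized as a subfield of ℂ of degree 2
over ℚ not contained in ℝ, with ring of integers `O` and Euclidean minimum
`μ = sup_{x ∈ K} inf_{a ∈ O} N(x − a) < 1` (the norm of z ∈ K ⊂ ℂ is `normSq z`).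
Let L be a Hermitian O-lattice of rank 2, given by the positive definite Hermitian
Gram matrix `G` (with entries in K) of an O-basis, and let `m` be its Hermitian
minimum, the least value of h(v,v) over nonzero coordinate vectors v with entries
in O.  Then the discriminant d_L = det G satisfies d_L ≥ m²(1 − μ). -/
theorem stmt2 (K : Subfield ℂ)
    (hdeg : Module.finrank ℚ K = 2)
    (himag : ¬ (K : Set ℂ) ⊆ Set.range (Complex.ofReal))
    (O : Set ℂ) (hO : O = {z : ℂ | z ∈ K ∧ IsIntegral ℤ z})
    (μ : ℝ) (hμlt : μ < 1)
    (hμ : (⨆ x : K, ⨅ a : O, Complex.normSq ((x : ℂ) - (a : ℂ))) = μ)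
    (G : Matrix (Fin 2) (Fin 2) ℂ) (hGK : ∀ i j, G i j ∈ K) (hG : G.PosDef)
    (m : ℝ)
    (hm : IsLeast {x : ℝ | ∃ v : Fin 2 → ℂ, (∀ i, v i ∈ O) ∧ v ≠ 0 ∧
      (star v ⬝ᵥ G.mulVec v).re = x} m) :
    m ^ 2 * (1 - μ) ≤ (G.det).re := by
  obtain ⟨w, hwK, hwim, hspan⟩ := K.exists_eq_add_mul_of_finrank_eq_two hdeg himag
  have : FiniteDimensional ℚ K := Module.finite_of_finrank_eq_succ hdeg
  obtain rfl : O = K.integers := hO.trans (Set.ext fun _ => Subfield.mem_integers.symm)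
  obtain ⟨C, hC⟩ := exists_forall_normSq_sub_le hwK hspan
  have hinf : ∀ x ∈ K, ⨅ a : K.integers, normSq (x - a) ≤ μ := fun x hx => by
    rw [← hμ]
    exact iInf_le_iSup_iInf_of_bounded (f := fun (x : K) (a : K.integers) => normSq (x - a))
      (fun _ _ => normSq_nonneg _) (fun x => let ⟨c, hc, hcC⟩ := hC x x.2; ⟨⟨c, hc⟩, hcC⟩) ⟨x, hx⟩
  have : IsPrincipalIdealRing K.integers := Subring.isPrincipalIdealRing_of_normSq
    (fun z hz => exists_normSq_eq_natCast hwK hwim hspan hz)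
    (fun a ha b hb => let ⟨c, hc⟩ :=
      exists_lt_of_ciInf_lt ((hinf _ (div_mem ha.1 hb.1)).trans_lt hμlt); ⟨c, c.2, hc⟩)
  obtain ⟨v, u, hvR, huR, hvm, hD0, hD1⟩ := exists_normSq_det_le_one_of_isLeast hG hm
  have hconj : ∀ z ∈ K, conj z ∈ K := fun _ => conj_mem_of_forall_eq_add_mul hwK hwim hspan
  have hvK : ∀ i, v i ∈ K := fun i => (hvR i).1
  have hxK := div_mem (K.star_dotProduct_mulVec_mem hconj hGK hvK fun i => (huR i).1)
    (K.star_dotProduct_mulVec_mem hconj hGK hvK hvK)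
  have hm0 := pos_of_isLeast_hermitianValues hG hm
  have hle : (m ^ 2 - G.det.re) / m ^ 2 ≤ μ :=
    (le_ciInf fun c => (div_le_iff₀' (by positivity)).2
      (sq_sub_det_le_of_isLeast hG hm hvR huR hvm hD0 hD1 c.2)).trans (hinf _ hxK)
  rw [div_le_iff₀ (by positivity)] at hle
  linarith
end

section
/- The Euclidean minimum of the ring of integers ℤ[(1+√−11)/2] of ℚ(√−11) is 9/11, i.e. sup_{x ∈ ℚ(√−11)} inf_{a ∈ ℤ[(1+√−11)/2]} N(x − a) = 9/11, where N is the norm form N(u + v√−11) = u² + 11v². -/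
private lemma keyL (s t : ℚ) (h0 : 0 ≤ s) (h1 : s ≤ 1/2) (h2 : 0 ≤ t)
    (h3 : s + 11*t ≤ 3) : s^2 + 11*t^2 ≤ 9/11 := by
  nlinarith [mul_nonneg (sub_nonneg.2 h1) (by linarith : (0:ℚ) ≤ 3 - s - 11*t),
    mul_nonneg h0 (by linarith : (0:ℚ) ≤ 3 - s - 11*t), mul_nonneg h0 h2]

private lemma exists_close (u v : ℚ) :
    ∃ m n : ℤ, (u - ((m:ℚ) + n/2))^2 + 11*(v - (n:ℚ)/2)^2 ≤ 9/11 := by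
  set n : ℤ := ⌊2*v⌋ with hn
  set k : ℤ := ⌊u - (n:ℚ)/2⌋ with hk
  set t : ℚ := v - (n:ℚ)/2 with htdef
  set r : ℚ := u - (n:ℚ)/2 - k with hrdef
  have ht0 : 0 ≤ t := by
    have := Int.floor_le (2*v); rw [htdef, hn]; linarith
  have ht1 : t < 1/2 := by
    have := Int.lt_floor_add_one (2*v); rw [htdef, hn]; push_cast at this ⊢; linarith
  have hr0 : 0 ≤ r := by
    have := Int.floor_le (u - (n:ℚ)/2); rw [hrdef, hk]; linarith
  have hr1 : r < 1 := by
    have := Int.lt_floor_add_one (u - (n:ℚ)/2); rw [hrdef, hk]; linarith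
  have eA : u - ((k:ℚ) + n/2) = r := by rw [hrdef]; ring
  have eB : u - (((k:ℤ)+1 : ℤ) + (n:ℚ)/2) = r - 1 := by push_cast; rw [hrdef]; ring
  have eC : u - ((k:ℚ) + ((n:ℤ)+1 : ℤ)/2) = r - 1/2 := by push_cast; rw [hrdef]; ring
  have eCt : v - (((n:ℤ)+1 : ℤ) : ℚ)/2 = t - 1/2 := by push_cast; rw [htdef]; ring
  have eAt : v - (n:ℚ)/2 = t := htdef.symm
  clear_value r t k n
  rcases le_or_gt r (1/2) with hr | hr
  · rcases le_or_gt (r + 11*t) 3 with h | h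
    · refine ⟨k, n, ?_⟩
      have := keyL r t hr0 hr ht0 h
      rw [eA, eAt]; linarith
    · refine ⟨k, n+1, ?_⟩
      have key := keyL (1/2 - r) (1/2 - t) (by linarith) (by linarith) (by linarith)
        (by linarith)
      rw [eC, eCt]
      nlinarith [key]
  · rcases le_or_gt ((1-r) + 11*t) 3 with h | h
    · refine ⟨k+1, n, ?_⟩
      have key := keyL (1-r) t (by linarith) (by linarith) ht0 h
      rw [eB, eAt]
      nlinarith [key]
    · refine ⟨k, n+1, ?_⟩
      have key := keyL (r - 1/2) (1/2 - t) (by linarith) (by linarith) (by linarith)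
        (by linarith)
      rw [eC, eCt]
      nlinarith [key]

private lemma far (m n : ℤ) :
    (9:ℚ)/11 ≤ (1/2 - ((m:ℚ) + n/2))^2 + 11*(5/22 - (n:ℚ)/2)^2 := by
  have h : n ≤ -1 ∨ n = 0 ∨ n = 1 ∨ 2 ≤ n := by omega
  rcases h with h | h | h | h
  · have : (n:ℚ) ≤ -1 := by exact_mod_cast h
    nlinarith [sq_nonneg ((1:ℚ)/2 - (m + n/2))]
  · subst h
    rcases le_or_gt m 0 with hm | hm
    · have : (m:ℚ) ≤ 0 := by exact_mod_cast hm
      nlinarith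
    · have : (1:ℚ) ≤ m := by exact_mod_cast hm
      nlinarith
  · subst h
    push_cast
    nlinarith [sq_nonneg ((m:ℚ))]
  · have : (2:ℚ) ≤ n := by exact_mod_cast h
    nlinarith [sq_nonneg ((1:ℚ)/2 - (m + n/2))]

/-- The Euclidean minimum of ℤ[(1+√−11)/2] is 9/11.  An element u + v√−11 of
K = ℚ(√−11) is encoded as the pair (u, v) : ℚ × ℚ; the ring of integers consists
of the elements ((m + n/2), n/2) with m, n ∈ ℤ (i.e. m + nη, η = (1+√−11)/2),
and the norm is N(u + v√−11) = u² + 11v². -/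
theorem stmt4 :
    (⨆ x : ℚ × ℚ,
      ⨅ a : {p : ℚ × ℚ // ∃ m n : ℤ, p = ((m : ℚ) + (n : ℚ) / 2, (n : ℚ) / 2)},
        (((x.1 - (a : ℚ × ℚ).1) ^ 2 + 11 * (x.2 - (a : ℚ × ℚ).2) ^ 2 : ℚ) : ℝ)) = 9 / 11 := by
  have hcast : ((9/11 : ℚ) : ℝ) = 9/11 := by norm_num
  have : Nonempty {p : ℚ × ℚ // ∃ m n : ℤ, p = ((m : ℚ) + (n : ℚ) / 2, (n : ℚ) / 2)} :=
    ⟨⟨((0 : ℚ), (0 : ℚ)), 0, 0, by norm_num⟩⟩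
  have hbddB : ∀ x : ℚ × ℚ, BddBelow (Set.range fun
      a : {p : ℚ × ℚ // ∃ m n : ℤ, p = ((m : ℚ) + (n : ℚ) / 2, (n : ℚ) / 2)} =>
      (((x.1 - (a : ℚ × ℚ).1) ^ 2 + 11 * (x.2 - (a : ℚ × ℚ).2) ^ 2 : ℚ) : ℝ)) := by
    intro x
    refine ⟨0, ?_⟩
    rintro y ⟨a, rfl⟩
    positivity
  have hle : ∀ x : ℚ × ℚ,
      (⨅ a : {p : ℚ × ℚ // ∃ m n : ℤ, p = ((m : ℚ) + (n : ℚ) / 2, (n : ℚ) / 2)},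
        (((x.1 - (a : ℚ × ℚ).1) ^ 2 + 11 * (x.2 - (a : ℚ × ℚ).2) ^ 2 : ℚ) : ℝ)) ≤ 9/11 := by
    intro x
    obtain ⟨m, n, hmn⟩ := exists_close x.1 x.2
    refine le_trans (ciInf_le (hbddB x)
      ⟨((m : ℚ) + (n : ℚ) / 2, (n : ℚ) / 2), m, n, rfl⟩) ?_
    rw [← hcast]
    exact_mod_cast hmn
  refine le_antisymm (ciSup_le hle) ?_
  refine le_trans ?_ (le_ciSup ⟨9/11, ?_⟩ ((1/2 : ℚ), (5/22 : ℚ)))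
  · refine le_ciInf ?_
    rintro ⟨a, m, n, rfl⟩
    rw [← hcast]
    exact_mod_cast far m n
  · rintro y ⟨x, rfl⟩
    exact hle x
end

section
/- The Euclidean minimum of the ring of integers ℤ[(1+√−7)/2] of ℚ(√−7) is 4/7: sup_{x ∈ ℚ(√−7)} inf_{a ∈ ℤ[(1+√−7)/2]} N(x − a) = 4/7. -/
/-- One of the two candidate lattice translates is within norm 4/7. -/
lemma euclMin7_key (a t : ℚ) (ha : 0 ≤ a) (ha' : a ≤ 1/2) (ht : 0 ≤ t) (ht' : t ≤ 1/4) :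
    a^2 + 7*t^2 ≤ 4/7 ∨ (1/2 - a)^2 + 7*(1/2 - t)^2 ≤ 4/7 := by
  by_contra hc
  push_neg at hc
  obtain ⟨h1, h2⟩ := hc
  have h3 : (0:ℚ) < (t - 3/14) * (t + 3/14) := by nlinarith
  have h4 : 3/14 < t := by nlinarith
  nlinarith [mul_nonneg ha (by linarith : (0:ℚ) ≤ 1/2 - a),
    mul_nonneg (by linarith : (0:ℚ) ≤ t - 3/14) (by linarith : (0:ℚ) ≤ 2/7 - t)]

/-- Integer inequality giving the lower bound at the point (0, 2/7). -/
lemma euclMin7_key2 (m n : ℤ) : 16 ≤ 7*(2*m+n)^2 + (7*n-4)^2 := by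
  rcases eq_or_ne (2*m+n) 0 with h | h
  · have hn : n = -2*m := by omega
    subst hn
    have : 4 ≤ 14*m+4 ∨ 14*m+4 ≤ -10 := by omega
    rcases this with h' | h' <;> nlinarith
  · have hA : 1 ≤ (2*m+n)^2 := by
      have : 1 ≤ 2*m+n ∨ 2*m+n ≤ -1 := by omega
      rcases this with h' | h' <;> nlinarith
    have hB : 9 ≤ (7*n-4)^2 := by
      have : 3 ≤ 7*n-4 ∨ 7*n-4 ≤ -3 := by omega
      rcases this with h' | h' <;> nlinarith
    linarith

/-- Every point of ℚ(√−7) is within norm 4/7 of a lattice point. -/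
lemma euclMin7_upper (u v : ℚ) :
    ∃ m n : ℤ, (u - ((m:ℚ) + (n:ℚ)/2))^2 + 7*(v - (n:ℚ)/2)^2 ≤ 4/7 := by
  set n₁ : ℤ := round (2*v) with hn₁
  set m₁ : ℤ := round (u - (n₁:ℚ)/2) with hm₁
  set t : ℚ := v - (n₁:ℚ)/2 with htdef
  set r : ℚ := u - (n₁:ℚ)/2 - (m₁:ℚ) with hrdef
  have ht4 : |t| ≤ 1/4 := by
    have h := abs_sub_round (2*v)
    have : t = (2*v - (n₁:ℚ))/2 := by rw [htdef]; ring
    rw [this, abs_div]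
    rw [hn₁]
    simp only [abs_of_pos (by norm_num : (0:ℚ) < 2)] at *
    linarith [h]
  have hr2 : |r| ≤ 1/2 := by
    have h := abs_sub_round (u - (n₁:ℚ)/2)
    rw [hrdef, hm₁]
    exact h
  rcases euclMin7_key |r| |t| (abs_nonneg r) hr2 (abs_nonneg t) ht4 with h | h
  · refine ⟨m₁, n₁, ?_⟩
    rw [sq_abs, sq_abs, hrdef, htdef] at h
    refine le_trans (le_of_eq ?_) h
    ring
  · rcases le_or_gt 0 t with htp | htn <;> rcases le_or_gt 0 r with hrp | hrn
    · refine ⟨m₁, n₁+1, ?_⟩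
      rw [abs_of_nonneg hrp, abs_of_nonneg htp, hrdef, htdef] at h
      refine le_trans (le_of_eq ?_) h
      push_cast
      ring
    · refine ⟨m₁-1, n₁+1, ?_⟩
      rw [abs_of_neg hrn, abs_of_nonneg htp, hrdef, htdef] at h
      refine le_trans (le_of_eq ?_) h
      push_cast
      ring
    · refine ⟨m₁+1, n₁-1, ?_⟩
      rw [abs_of_nonneg hrp, abs_of_neg htn, hrdef, htdef] at h
      refine le_trans (le_of_eq ?_) h
      push_cast
      ring
    · refine ⟨m₁, n₁-1, ?_⟩
      rw [abs_of_neg hrn, abs_of_neg htn, hrdef, htdef] at h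
      refine le_trans (le_of_eq ?_) h
      push_cast
      ring

/-- The Euclidean minimum of ℤ[(1+√−7)/2] is 4/7.  An element u + v√−7 of
K = ℚ(√−7) is encoded as the pair (u, v) : ℚ × ℚ; the ring of integers consists
of the elements ((m + n/2), n/2) with m, n ∈ ℤ (i.e. m + nα, α = (1+√−7)/2),
and the norm is N(u + v√−7) = u² + 7v². -/
theorem stmt5 :
    (⨆ x : ℚ × ℚ,
      ⨅ a : {p : ℚ × ℚ // ∃ m n : ℤ, p = ((m : ℚ) + (n : ℚ) / 2, (n : ℚ) / 2)},
        (((x.1 - (a : ℚ × ℚ).1) ^ 2 + 7 * (x.2 - (a : ℚ × ℚ).2) ^ 2 : ℚ) : ℝ)) = 4 / 7 := by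
  have hne : Nonempty {p : ℚ × ℚ // ∃ m n : ℤ, p = ((m : ℚ) + (n : ℚ) / 2, (n : ℚ) / 2)} :=
    ⟨⟨((0:ℚ), (0:ℚ)), 0, 0, by norm_num⟩⟩
  have hbdd : ∀ x : ℚ × ℚ, BddBelow (Set.range fun a : {p : ℚ × ℚ // ∃ m n : ℤ, p = ((m : ℚ) + (n : ℚ) / 2, (n : ℚ) / 2)} =>
      (((x.1 - (a : ℚ × ℚ).1) ^ 2 + 7 * (x.2 - (a : ℚ × ℚ).2) ^ 2 : ℚ) : ℝ)) := by
    intro x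
    refine ⟨0, ?_⟩
    rintro y ⟨a, rfl⟩
    positivity
  have hub : ∀ x : ℚ × ℚ,
      (⨅ a : {p : ℚ × ℚ // ∃ m n : ℤ, p = ((m : ℚ) + (n : ℚ) / 2, (n : ℚ) / 2)},
        (((x.1 - (a : ℚ × ℚ).1) ^ 2 + 7 * (x.2 - (a : ℚ × ℚ).2) ^ 2 : ℚ) : ℝ)) ≤ 4 / 7 := by
    intro x
    obtain ⟨m, n, hmn⟩ := euclMin7_upper x.1 x.2
    refine ciInf_le_of_le (hbdd x) ⟨((m:ℚ) + (n:ℚ)/2, (n:ℚ)/2), m, n, rfl⟩ ?_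
    have : ((4:ℝ)/7) = ((4/7 : ℚ) : ℝ) := by norm_num
    rw [this, Rat.cast_le]
    exact hmn
  apply le_antisymm
  · exact ciSup_le hub
  · have hstep : (4:ℝ)/7 ≤
        ⨅ a : {p : ℚ × ℚ // ∃ m n : ℤ, p = ((m : ℚ) + (n : ℚ) / 2, (n : ℚ) / 2)},
          (((((0:ℚ), (2/7:ℚ)).1 - (a : ℚ × ℚ).1) ^ 2 + 7 * (((0:ℚ), (2/7:ℚ)).2 - (a : ℚ × ℚ).2) ^ 2 : ℚ) : ℝ) := by
      refine le_ciInf fun a => ?_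
      obtain ⟨p, m, n, hp⟩ := a
      subst hp
      simp only
      have hz := euclMin7_key2 m n
      have hq : (4:ℚ)/7 ≤ ((0:ℚ) - ((m:ℚ) + (n:ℚ)/2))^2 + 7*((2/7:ℚ) - (n:ℚ)/2)^2 := by
        have hc : (16:ℚ) ≤ 7*(2*(m:ℚ)+(n:ℚ))^2 + (7*(n:ℚ)-4)^2 := by exact_mod_cast hz
        nlinarith [hc]
      have : ((4:ℝ)/7) = ((4/7 : ℚ) : ℝ) := by norm_num
      rw [this, Rat.cast_le]
      exact hq
    refine le_trans hstep (le_ciSup (f := fun x : ℚ × ℚ =>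
      ⨅ a : {p : ℚ × ℚ // ∃ m n : ℤ, p = ((m : ℚ) + (n : ℚ) / 2, (n : ℚ) / 2)},
        (((x.1 - (a : ℚ × ℚ).1) ^ 2 + 7 * (x.2 - (a : ℚ × ℚ).2) ^ 2 : ℚ) : ℝ))
      ⟨4/7, ?_⟩ ((0:ℚ), (2/7:ℚ)))
    rintro y ⟨x, rfl⟩
    exact hub x
end

section
/- The Euclidean minimum of the Eisenstein integers ℤ[(1+√−3)/2] equals 1/3. -/
private lemma eisenstein_lower (m n : ℤ) :
    (1/3 : ℚ) ≤ (1/2 - ((m:ℚ) + (n:ℚ)/2))^2 + 3*(1/6 - (n:ℚ)/2)^2 := by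
  have key : (4 : ℤ) ≤ 3*(1-2*m-n)^2 + (1-3*n)^2 := by
    rcases eq_or_ne (1-2*m-n) 0 with h | h
    · have hn : n = 1 - 2*m := by omega
      subst hn
      rcases le_or_gt m 0 with hm | hm <;> nlinarith
    · have h1 : 1 ≤ (1-2*m-n)^2 := by
        rcases lt_or_gt_of_ne h with h' | h' <;> nlinarith
      have h2 : (1-3*n) ≠ 0 := by omega
      have h3 : 1 ≤ (1-3*n)^2 := by
        rcases lt_or_gt_of_ne h2 with h' | h' <;> nlinarith
      nlinarith
  have keyq : (4:ℚ) ≤ 3*(1-2*(m:ℚ)-(n:ℚ))^2 + (1-3*(n:ℚ))^2 := by exact_mod_cast key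
  have expand : (1/2 - ((m:ℚ) + (n:ℚ)/2))^2 + 3*(1/6 - (n:ℚ)/2)^2
      = 1/3 + (3*(1-2*(m:ℚ)-(n:ℚ))^2 + (1-3*(n:ℚ))^2 - 4)/12 := by ring
  rw [expand]; linarith

private lemma eisenstein_pick (e0 e1 f : ℚ) (he0l : -(1/2) ≤ e0) (he0r : e0 ≤ 1/2)
    (he1l : -(1/2) ≤ e1) (he1r : e1 ≤ 1/2)
    (hdiff : (e0 - e1)^2 = 1/4) (hprod : e0 * e1 ≤ 0)
    (hf0 : 0 ≤ f) (hf1 : f < 1) :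
    e0^2 + 3*f^2 ≤ 1/3 ∨ e1^2 + 3*(f - 1/2)^2 ≤ 1/3 ∨ e0^2 + 3*(f-1)^2 ≤ 1/3 := by
  rcases le_or_gt f (1/6) with hc | hc
  · left; nlinarith
  rcases le_or_gt (5/6) f with hc2 | hc2
  · right; right; nlinarith
  rcases le_or_gt (1/3) f with hc3 | hc3
  · rcases le_or_gt f (2/3) with hc4 | hc4
    · right; left; nlinarith
    · rcases le_or_gt (e1^2 + 3*(f-1/2)^2) (1/3) with hg | hg
      · right; left; exact hg
      · right; right
        nlinarith [mul_nonneg (by linarith : (0:ℚ) ≤ f - 2/3) (by linarith : (0:ℚ) ≤ 5/6 - f)]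
  · rcases le_or_gt (e0^2 + 3*f^2) (1/3) with hg | hg
    · left; exact hg
    · right; left
      nlinarith [mul_nonneg (by linarith : (0:ℚ) ≤ f - 1/6) (by linarith : (0:ℚ) ≤ 1/3 - f)]

private lemma eisenstein_upper (u v : ℚ) :
    ∃ m n : ℤ, (u - ((m:ℚ) + (n:ℚ)/2))^2 + 3*(v - (n:ℚ)/2)^2 ≤ 1/3 := by
  obtain ⟨L, hLdef⟩ : ∃ x : ℤ, x = ⌊v⌋ := ⟨_, rfl⟩
  obtain ⟨r0, hr0def⟩ : ∃ x : ℤ, x = round (u - (L:ℚ)) := ⟨_, rfl⟩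
  obtain ⟨r1, hr1def⟩ : ∃ x : ℤ, x = round (u - (L:ℚ) - 1/2) := ⟨_, rfl⟩
  obtain ⟨e0, he0def⟩ : ∃ x : ℚ, x = u - L - r0 := ⟨_, rfl⟩
  obtain ⟨e1, he1def⟩ : ∃ x : ℚ, x = u - L - 1/2 - r1 := ⟨_, rfl⟩
  obtain ⟨f, hfdef⟩ : ∃ x : ℚ, x = v - L := ⟨_, rfl⟩
  have hf0 : 0 ≤ f := by
    rw [hfdef, hLdef]; have := Int.floor_le v; linarith
  have hf1 : f < 1 := by
    rw [hfdef, hLdef]; have := Int.lt_floor_add_one v; push_cast at this ⊢; linarith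
  have he0 : |e0| ≤ 1/2 := by rw [he0def, hr0def]; exact abs_sub_round _
  have he1 : |e1| ≤ 1/2 := by rw [he1def, hr1def]; exact abs_sub_round _
  obtain ⟨he0l, he0r⟩ := abs_le.mp he0
  obtain ⟨he1l, he1r⟩ := abs_le.mp he1
  have hkeq : e0 - e1 = 1/2 - ((r0 - r1 : ℤ) : ℚ) := by
    rw [he0def, he1def]; push_cast; ring
  obtain ⟨k, hkdef⟩ : ∃ x : ℤ, x = r0 - r1 := ⟨_, rfl⟩
  rw [← hkdef] at hkeq
  have hkq1 : (k:ℚ) < 2 := by linarith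
  have hkq2 : (-1:ℚ) < (k:ℚ) := by
    have : (-1 : ℚ) = ((-1 : ℤ) : ℚ) := by norm_num
    linarith
  have hk1 : k < 2 := by exact_mod_cast hkq1
  have hk2 : -1 < k := by exact_mod_cast hkq2
  have hdiff : (e0 - e1)^2 = 1/4 := by
    interval_cases k <;> (rw [hkeq]; push_cast; norm_num)
  have hprod : e0 * e1 ≤ 0 := by
    interval_cases k
    · push_cast at hkeq
      have h1 : e1 ≤ 0 := by linarith
      have h2 : 0 ≤ e0 := by linarith
      exact mul_nonpos_of_nonneg_of_nonpos h2 h1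
    · push_cast at hkeq
      have h1 : 0 ≤ e1 := by linarith
      have h2 : e0 ≤ 0 := by linarith
      exact mul_nonpos_of_nonpos_of_nonneg h2 h1
  rcases eisenstein_pick e0 e1 f he0l he0r he1l he1r hdiff hprod hf0 hf1 with h | h | h
  · refine ⟨r0, 2*L, ?_⟩
    have eq1 : (u - (((r0 : ℤ):ℚ) + ((2*L : ℤ):ℚ)/2))^2 + 3*(v - ((2*L : ℤ):ℚ)/2)^2
        = e0^2 + 3*f^2 := by rw [he0def, hfdef]; push_cast; ring
    rw [eq1]; exact h
  · refine ⟨r1, 2*L+1, ?_⟩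
    have eq1 : (u - (((r1 : ℤ):ℚ) + ((2*L+1 : ℤ):ℚ)/2))^2 + 3*(v - ((2*L+1 : ℤ):ℚ)/2)^2
        = e1^2 + 3*(f-1/2)^2 := by rw [he1def, hfdef]; push_cast; ring
    rw [eq1]; exact h
  · refine ⟨r0 - 1, 2*L+2, ?_⟩
    have eq1 : (u - (((r0 - 1 : ℤ):ℚ) + ((2*L+2 : ℤ):ℚ)/2))^2 + 3*(v - ((2*L+2 : ℤ):ℚ)/2)^2
        = e0^2 + 3*(f-1)^2 := by rw [he0def, hfdef]; push_cast; ring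
    rw [eq1]; exact h

/-- The Euclidean minimum of the Eisenstein integers ℤ[(1+√−3)/2] is 1/3.
An element u + v√−3 of ℚ(√−3) is encoded as (u, v) : ℚ × ℚ; the ring of integers
consists of the elements ((m + n/2), n/2) with m, n ∈ ℤ, and the norm is
N(u + v√−3) = u² + 3v². -/
theorem stmt7 :
    (⨆ x : ℚ × ℚ,
      ⨅ a : {p : ℚ × ℚ // ∃ m n : ℤ, p = ((m : ℚ) + (n : ℚ) / 2, (n : ℚ) / 2)},
        (((x.1 - (a : ℚ × ℚ).1) ^ 2 + 3 * (x.2 - (a : ℚ × ℚ).2) ^ 2 : ℚ) : ℝ)) = 1 / 3 := by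
  haveI hne : Nonempty {p : ℚ × ℚ // ∃ m n : ℤ, p = ((m : ℚ) + (n : ℚ) / 2, (n : ℚ) / 2)} :=
    ⟨⟨(0,0), 0, 0, by norm_num⟩⟩
  have hbdd : ∀ x : ℚ × ℚ, BddBelow (Set.range fun a :
      {p : ℚ × ℚ // ∃ m n : ℤ, p = ((m : ℚ) + (n : ℚ) / 2, (n : ℚ) / 2)} =>
      (((x.1 - (a : ℚ × ℚ).1) ^ 2 + 3 * (x.2 - (a : ℚ × ℚ).2) ^ 2 : ℚ) : ℝ)) := by
    intro x
    refine ⟨0, ?_⟩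
    rintro y ⟨a, rfl⟩
    positivity
  have hle : ∀ x : ℚ × ℚ, (⨅ a : {p : ℚ × ℚ // ∃ m n : ℤ, p = ((m : ℚ) + (n : ℚ) / 2, (n : ℚ) / 2)},
      (((x.1 - (a : ℚ × ℚ).1) ^ 2 + 3 * (x.2 - (a : ℚ × ℚ).2) ^ 2 : ℚ) : ℝ)) ≤ 1/3 := by
    intro x
    obtain ⟨m, n, h⟩ := eisenstein_upper x.1 x.2
    refine ciInf_le_of_le (hbdd x) ⟨((m:ℚ) + (n:ℚ)/2, (n:ℚ)/2), m, n, rfl⟩ ?_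
    rw [show ((1:ℝ)/3) = (((1/3 : ℚ)):ℝ) by norm_num]
    exact_mod_cast h
  apply le_antisymm
  · exact ciSup_le hle
  · refine le_ciSup_of_le ⟨1/3, ?_⟩ ((1/2 : ℚ), (1/6 : ℚ)) ?_
    · rintro y ⟨x, rfl⟩
      exact hle x
    · refine le_ciInf ?_
      rintro ⟨a, m, n, rfl⟩
      rw [show ((1:ℝ)/3) = (((1/3 : ℚ)):ℝ) by norm_num]
      exact_mod_cast eisenstein_lower m n
end

section
/- The Euclidean minimum of ℤ[√−2] equals 3/4. -/
private lemma sq_round_le (q : ℚ) : ((q - (round q : ℚ)) ^ 2 : ℚ) ≤ 1/4 := by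
  have h : |q - (round q : ℚ)| ≤ 1/2 := abs_sub_round q
  have h0 : (0:ℚ) ≤ |q - (round q : ℚ)| := abs_nonneg _
  nlinarith [sq_abs (q - (round q : ℚ))]

private lemma half_sq (a : ℤ) : (1/4 : ℚ) ≤ ((1:ℚ)/2 - (a:ℚ)) ^ 2 := by
  rcases le_or_gt a 0 with h | h
  · have : (a:ℚ) ≤ 0 := by exact_mod_cast h
    nlinarith
  · have : (1:ℚ) ≤ (a:ℚ) := by exact_mod_cast h
    nlinarith

/-- The Euclidean minimum of ℤ[√−2] is 3/4.  An element u + v√−2 of ℚ(√−2) is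
encoded as (u, v) : ℚ × ℚ, the ring of integers is ℤ + ℤ√−2, and the norm is
N(u + v√−2) = u² + 2v². -/
theorem stmt8 :
    (⨆ x : ℚ × ℚ,
      ⨅ a : ℤ × ℤ,
        (((x.1 - (a.1 : ℚ)) ^ 2 + 2 * (x.2 - (a.2 : ℚ)) ^ 2 : ℚ) : ℝ)) = 3 / 4 := by
  have hinf_le : ∀ x : ℚ × ℚ,
      (⨅ a : ℤ × ℤ, (((x.1 - (a.1 : ℚ)) ^ 2 + 2 * (x.2 - (a.2 : ℚ)) ^ 2 : ℚ) : ℝ)) ≤ 3/4 := by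
    intro x
    have hbdd : BddBelow (Set.range fun a : ℤ × ℤ =>
        (((x.1 - (a.1 : ℚ)) ^ 2 + 2 * (x.2 - (a.2 : ℚ)) ^ 2 : ℚ) : ℝ)) := by
      refine ⟨0, ?_⟩
      rintro _ ⟨a, rfl⟩
      have : (0:ℚ) ≤ (x.1 - (a.1 : ℚ)) ^ 2 + 2 * (x.2 - (a.2 : ℚ)) ^ 2 := by positivity
      simpa using (Rat.cast_le (K := ℝ)).mpr this
    refine le_trans (ciInf_le hbdd (round x.1, round x.2)) ?_
    have h1 := sq_round_le x.1
    have h2 := sq_round_le x.2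
    have : ((x.1 - (round x.1 : ℚ)) ^ 2 + 2 * (x.2 - (round x.2 : ℚ)) ^ 2 : ℚ) ≤ 3/4 := by
      linarith
    simpa using (Rat.cast_le (K := ℝ)).mpr this
  refine le_antisymm (ciSup_le hinf_le) ?_
  have hbddA : BddAbove (Set.range fun x : ℚ × ℚ =>
      ⨅ a : ℤ × ℤ, (((x.1 - (a.1 : ℚ)) ^ 2 + 2 * (x.2 - (a.2 : ℚ)) ^ 2 : ℚ) : ℝ)) := by
    refine ⟨3/4, ?_⟩
    rintro _ ⟨x, rfl⟩
    exact hinf_le x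
  refine le_trans ?_ (le_ciSup hbddA ((1/2 : ℚ), (1/2 : ℚ)))
  refine le_ciInf ?_
  intro a
  have h1 := half_sq a.1
  have h2 := half_sq a.2
  have : (3/4 : ℚ) ≤ ((1:ℚ)/2 - (a.1 : ℚ)) ^ 2 + 2 * ((1:ℚ)/2 - (a.2 : ℚ)) ^ 2 := by linarith
  simpa using (Rat.cast_le (K := ℝ)).mpr this
end

section
/- Let K = ℚ(√−11) with ring of integers O_K = ℤ[η], η = (1+√−11)/2, and let L be a rank-2 Hermitian O_K-lattice with Hermitian minimum 2 and discriminant d_L ≤ 1. Then the Gram matrix of a suitable O_K-basis of L is [[2, z],[z̄, 2]] with z ∈ (1/√−11)O_K and N(z) ∈ {3, 36/11}; in particular d_L ∈ {8/11, 1}. -/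
open Matrix Complex
open scoped ComplexOrder

/-- √−11, realized in ℂ. -/
noncomputable def s11 : ℂ := Complex.I * Real.sqrt 11

/-- η = (1+√−11)/2, a root of η² − η + 3 = 0, realized in ℂ. -/
noncomputable def η11 : ℂ := (1 + s11) / 2

/-- The ring of integers ℤ[η] of ℚ(√−11), as a subset of ℂ. -/
noncomputable def O11 : Set ℂ := {z | ∃ a b : ℤ, z = (a : ℂ) + (b : ℂ) * η11}

/-!
ℤ[η] is norm-Euclidean with constant 9/11: every point of ℂ lies within squared distance 9/11
of ℤ[η]. Hence any two elements of ℤ[η] have a Bézout gcd, and a minimal vector v of L is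
primitive: writing v = g • v', the relation 2 = N(g) h(v', v') ≥ 2 N(g) forces g to be a unit.
So v extends to a basis (v, w), and shifting w by a multiple of v gives N(h(v, w)) ≤ 4 · 9/11.
Now h(w, w) is a rational integer with 2 ≤ h(w, w) = (d_L + N(h(v, w))) / 2 < 3, so the Gram
matrix is [[2, z], [z̄, 2]] and d_L = 4 − N(z) ∈ [8/11, 1]. Since 11 N(z) is the norm of an
element of ℤ[η] and no element has norm 34 or 35, N(z) ∈ {3, 36/11}.
-/

open ComplexConjugate

lemma s11_sq : s11 ^ 2 = -11 := by
  simp [s11, mul_pow, ← ofReal_pow]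

lemma conj_s11 : conj s11 = -s11 := by simp [s11]

lemma s11_ne_zero : s11 ≠ 0 := by simp [s11]

lemma η11_sq : η11 ^ 2 = η11 - 3 := by
  unfold η11; linear_combination (1/4 : ℂ) * s11_sq

lemma conj_η11 : conj η11 = 1 - η11 := by
  simp only [η11, map_div₀, map_add, map_one, conj_s11, map_ofNat]; ring

lemma normSq_ofReal_add_ofReal_mul_η11 (p q : ℝ) :
    normSq (p + q * η11) = p ^ 2 + p * q + 3 * q ^ 2 := by
  rw [← ofReal_inj, ← mul_conj]
  simp only [map_add, map_mul, conj_ofReal, conj_η11]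
  push_cast
  linear_combination -(q : ℂ) ^ 2 * η11_sq

lemma normSq_intCast_add_intCast_mul_η11 (a b : ℤ) :
    normSq (a + b * η11) = ((a ^ 2 + a * b + 3 * b ^ 2 : ℤ) : ℝ) := by
  simpa using normSq_ofReal_add_ofReal_mul_η11 a b

noncomputable def O11Ring : Subring ℂ where
  carrier := O11
  mul_mem' := by
    rintro _ _ ⟨a, b, rfl⟩ ⟨c, d, rfl⟩
    refine ⟨a * c - 3 * (b * d), a * d + b * c + b * d, ?_⟩
    push_cast
    linear_combination (b : ℂ) * d * η11_sq
  one_mem' := ⟨1, 0, by simp⟩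
  add_mem' := by
    rintro _ _ ⟨a, b, rfl⟩ ⟨c, d, rfl⟩
    exact ⟨a + c, b + d, by push_cast; ring⟩
  zero_mem' := ⟨0, 0, by simp⟩
  neg_mem' := by
    rintro _ ⟨a, b, rfl⟩
    exact ⟨-a, -b, by push_cast; ring⟩

lemma conj_mem_O11Ring {x : ℂ} (hx : x ∈ O11Ring) : conj x ∈ O11Ring := by
  obtain ⟨a, b, rfl⟩ := hx
  exact ⟨a + b, -b, by simp only [map_add, map_mul, map_intCast, conj_η11]; push_cast; ring⟩

lemma exists_normSq_eq_intCast {x : ℂ} (hx : x ∈ O11Ring) : ∃ n : ℤ, normSq x = n := by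
  obtain ⟨a, b, rfl⟩ := hx
  exact ⟨_, normSq_intCast_add_intCast_mul_η11 a b⟩

-- Sharp: both alternatives are equalities at (u, f) = (0, 6/11).
lemma sq_add_sq_le_or_of_le_half (u f : ℝ) (hu₀ : 0 ≤ u) (hu₁ : u ≤ 1 / 2) (hf₀ : 0 ≤ f)
    (hf₁ : f ≤ 1) :
    u ^ 2 + 11 / 4 * f ^ 2 ≤ 9 / 11 ∨ (1 / 2 - u) ^ 2 + 11 / 4 * (1 - f) ^ 2 ≤ 9 / 11 := by
  by_contra! h
  have hf_gt : 5 / 11 < f := by nlinarith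
  have hf_lt : f < 6 / 11 := by nlinarith
  nlinarith [mul_pos (sub_pos.2 hf_gt) (sub_pos.2 hf_lt),
    mul_nonneg hu₀ (by linarith : 0 ≤ 1 - 2 * u)]

lemma sq_add_sq_le_or_or (g f : ℝ) (hg₀ : 0 ≤ g) (hg₁ : g ≤ 1) (hf₀ : 0 ≤ f) (hf₁ : f ≤ 1) :
    g ^ 2 + 11 / 4 * f ^ 2 ≤ 9 / 11 ∨ (1 - g) ^ 2 + 11 / 4 * f ^ 2 ≤ 9 / 11 ∨
      (g - 1 / 2) ^ 2 + 11 / 4 * (1 - f) ^ 2 ≤ 9 / 11 := by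
  rcases le_total g (1 / 2) with hg | hg
  · rcases sq_add_sq_le_or_of_le_half g f hg₀ hg hf₀ hf₁ with h | h
    · exact .inl h
    · right; right; nlinarith
  · rcases sq_add_sq_le_or_of_le_half (1 - g) f (by linarith) (by linarith) hf₀ hf₁ with h | h
    · exact .inr (.inl h)
    · right; right; nlinarith

-- The left-hand side is `normSq ((x - a) + (y - b) * η11)`.
lemma exists_int_sq_add_sq_le (x y : ℝ) :
    ∃ a b : ℤ, (x - a + (y - b) / 2) ^ 2 + 11 / 4 * (y - b) ^ 2 ≤ 9 / 11 := by
  set f := Int.fract y with hf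
  set g := Int.fract (x + f / 2) with hg
  rcases sq_add_sq_le_or_or g f (Int.fract_nonneg _) (Int.fract_lt_one _).le
    (Int.fract_nonneg _) (Int.fract_lt_one _).le with h | h | h
  · refine ⟨⌊x + f / 2⌋, ⌊y⌋, le_of_eq_of_le ?_ h⟩
    simp only [hf, hg, Int.fract]; ring
  · refine ⟨⌊x + f / 2⌋ + 1, ⌊y⌋, le_of_eq_of_le ?_ h⟩
    simp only [hf, hg, Int.fract]; push_cast; ring
  · refine ⟨⌊x + f / 2⌋, ⌊y⌋ + 1, le_of_eq_of_le ?_ h⟩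
    simp only [hf, hg, Int.fract]; push_cast; ring

lemma exists_mem_O11Ring_normSq_sub_le (t : ℂ) : ∃ c ∈ O11Ring, normSq (t - c) ≤ 9 / 11 := by
  obtain ⟨x, y, rfl⟩ : ∃ x y : ℝ, t = x + y * η11 := by
    refine ⟨t.re - t.im / √11, 2 * t.im / √11, Complex.ext ?_ ?_⟩ <;> simp [η11, s11]
    · ring
    · field_simp
  obtain ⟨a, b, h⟩ := exists_int_sq_add_sq_le x y
  refine ⟨a + b * η11, ⟨a, b, rfl⟩, ?_⟩
  have hdiff :
      (x : ℂ) + y * η11 - (a + b * η11) = ((x - a : ℝ) : ℂ) + ((y - b : ℝ) : ℂ) * η11 := by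
    push_cast; ring
  rw [hdiff, normSq_ofReal_add_ofReal_mul_η11]
  linear_combination h

lemma exists_gcd_O11Ring {α β : ℂ} (hα : α ∈ O11Ring) (hβ : β ∈ O11Ring) :
    ∃ g ∈ O11Ring, (∃ x ∈ O11Ring, ∃ y ∈ O11Ring, x * α + y * β = g) ∧
      (∃ p ∈ O11Ring, α = g * p) ∧ ∃ q ∈ O11Ring, β = g * q := by
  obtain ⟨n, hn⟩ := exists_nat_gt (normSq β)
  induction n generalizing α β with
  | zero => exact absurd hn (by simpa using normSq_nonneg β)
  | succ n ih =>
    by_cases hβ0 : β = 0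
    · exact ⟨α, hα, ⟨1, one_mem _, 0, zero_mem _, by simp⟩, ⟨1, one_mem _, by simp⟩,
        0, zero_mem _, by simp [hβ0]⟩
    obtain ⟨c, hc, hcov⟩ := exists_mem_O11Ring_normSq_sub_le (α / β)
    have hr : α - c * β ∈ O11Ring := sub_mem hα (mul_mem hc hβ)
    have hlt : normSq (α - c * β) < normSq β := by
      have hβpos := normSq_pos.2 hβ0
      rw [show α - c * β = (α / β - c) * β by field_simp, normSq_mul]
      nlinarith
    have hrn : normSq (α - c * β) < n := by
      obtain ⟨k, hk⟩ := exists_normSq_eq_intCast hβ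
      obtain ⟨l, hl⟩ := exists_normSq_eq_intCast hr
      rw [hk, hl] at hlt
      rw [hk] at hn
      rw [hl]
      have hlk : l < k := by exact_mod_cast hlt
      have hkn : k < n + 1 := by exact_mod_cast hn
      exact_mod_cast (by omega : l < n)
    obtain ⟨g, hg, ⟨x, hx, y, hy, hxy⟩, ⟨p, hp, hβp⟩, q, hq, hrq⟩ := ih hβ hr hrn
    exact ⟨g, hg, ⟨y, hy, x - y * c, sub_mem hx (mul_mem hy hc), by linear_combination hxy⟩,
      ⟨q + c * p, add_mem hq (mul_mem hc hp), by linear_combination hrq + c * hβp⟩, p, hp, hβp⟩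

lemma star_smul_dotProduct_mulVec_smul {n : Type*} [Fintype n] (G : Matrix n n ℂ) (c : ℂ)
    (v : n → ℂ) : star (c • v) ⬝ᵥ G *ᵥ (c • v) = normSq c * (star v ⬝ᵥ G *ᵥ v) := by
  rw [star_smul, mulVec_smul, smul_dotProduct, dotProduct_smul, smul_eq_mul, smul_eq_mul,
    ← mul_assoc, star_def, mul_comm (conj c), mul_conj]

lemma exists_mul_add_mul_eq_one_of_minimal (G : Matrix (Fin 2) (Fin 2) ℂ) {m : ℝ} (hm : 0 < m)
    (hmin : ∀ w : Fin 2 → ℂ, (∀ i, w i ∈ O11Ring) → w ≠ 0 → m ≤ (star w ⬝ᵥ G *ᵥ w).re)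
    {v : Fin 2 → ℂ} (hv : ∀ i, v i ∈ O11Ring) (hvm : (star v ⬝ᵥ G *ᵥ v).re = m) :
    ∃ X ∈ O11Ring, ∃ Y ∈ O11Ring, X * v 0 + Y * v 1 = 1 := by
  obtain ⟨g, hg, ⟨x, hx, y, hy, hxy⟩, ⟨p, hp, hvp⟩, q, hq, hvq⟩ :=
    exists_gcd_O11Ring (hv 0) (hv 1)
  set w : Fin 2 → ℂ := ![p, q]
  have hvw : v = g • w := by ext i; fin_cases i <;> simp [w, hvp, hvq]
  have hwO : ∀ i, w i ∈ O11Ring := by intro i; fin_cases i; exacts [hp, hq]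
  have hw0 : w ≠ 0 := by
    rintro hw
    rw [hvw, hw, smul_zero] at hvm
    simp only [star_zero, mulVec_zero, dotProduct_zero, zero_re] at hvm
    linarith
  have hmw : m = normSq g * (star w ⬝ᵥ G *ᵥ w).re := by
    rw [← hvm, hvw, star_smul_dotProduct_mulVec_smul, re_ofReal_mul]
  have hg1 : normSq g = 1 := by
    have hle := hmin w hwO hw0
    obtain ⟨k, hk⟩ := exists_normSq_eq_intCast hg
    rw [hk] at hmw ⊢
    have hk1 : k ≤ 1 := by exact_mod_cast (by nlinarith : (k : ℝ) ≤ 1)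
    have hk0 : 0 < k := by exact_mod_cast (by nlinarith : (0 : ℝ) < k)
    exact_mod_cast (by omega : k = 1)
  have hgg : conj g * g = 1 := by rw [mul_comm, mul_conj, hg1, ofReal_one]
  exact ⟨conj g * x, mul_mem (conj_mem_O11Ring hg) hx, conj g * y,
    mul_mem (conj_mem_O11Ring hg) hy, by linear_combination conj g * hxy + hgg⟩

lemma conjTranspose_mul_mul_apply {n α : Type*} [Fintype n] [Semiring α] [Star α]
    (G U : Matrix n n α) (i j : n) :
    (Uᴴ * G * U) i j = star (Uᵀ i) ⬝ᵥ G *ᵥ Uᵀ j := by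
  simp only [mul_apply, dotProduct, mulVec, conjTranspose_apply, transpose_apply, Pi.star_apply,
    Finset.sum_mul, Finset.mul_sum]
  rw [Finset.sum_comm]
  simp only [mul_assoc]

lemma exists_det_eq_one_normSq_gram_le (G : Matrix (Fin 2) (Fin 2) ℂ) {v : Fin 2 → ℂ}
    (hv : ∀ i, v i ∈ O11Ring) {X Y : ℂ} (hX : X ∈ O11Ring) (hY : Y ∈ O11Ring)
    (hXY : X * v 0 + Y * v 1 = 1) (hQ : star v ⬝ᵥ G *ᵥ v ≠ 0) :
    ∃ U : Matrix (Fin 2) (Fin 2) ℂ, (∀ i j, U i j ∈ O11Ring) ∧ U.det = 1 ∧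
      (Uᴴ * G * U) 0 0 = star v ⬝ᵥ G *ᵥ v ∧
      normSq ((Uᴴ * G * U) 0 1) ≤ 9 / 11 * normSq (star v ⬝ᵥ G *ᵥ v) := by
  set w₁ : Fin 2 → ℂ := ![-Y, X]
  obtain ⟨c, hc, hcov⟩ :=
    exists_mem_O11Ring_normSq_sub_le ((star v ⬝ᵥ G *ᵥ w₁) / (star v ⬝ᵥ G *ᵥ v))
  set w := w₁ - c • v
  have hw : ∀ i, w i ∈ O11Ring := fun i ↦
    sub_mem (by fin_cases i; exacts [neg_mem hY, hX]) (mul_mem hc (hv i))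
  refine ⟨(of ![v, w])ᵀ, ?_, ?_, ?_, ?_⟩
  · intro i j
    fin_cases j; exacts [hv i, hw i]
  · rw [det_transpose, det_fin_two]
    simp only [of_apply, cons_val_zero, cons_val_one, w, w₁, Pi.sub_apply, Pi.smul_apply,
      smul_eq_mul]
    linear_combination hXY
  · rw [conjTranspose_mul_mul_apply, transpose_transpose]; rfl
  · rw [conjTranspose_mul_mul_apply, transpose_transpose]
    have : star v ⬝ᵥ G *ᵥ w =
        ((star v ⬝ᵥ G *ᵥ w₁) / (star v ⬝ᵥ G *ᵥ v) - c) * (star v ⬝ᵥ G *ᵥ v) := by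
      rw [mulVec_sub, mulVec_smul, dotProduct_sub, dotProduct_smul, smul_eq_mul]
      field_simp
    change normSq (star v ⬝ᵥ G *ᵥ w) ≤ _
    rw [this, normSq_mul]
    exact mul_le_mul_of_nonneg_right hcov (normSq_nonneg _)

noncomputable def invDiff11 : AddSubgroup ℂ where
  carrier := {z | ∃ w ∈ O11, z = w / s11}
  add_mem' := by
    rintro _ _ ⟨w, hw, rfl⟩ ⟨w', hw', rfl⟩
    exact ⟨w + w', add_mem (show w ∈ O11Ring from hw) hw', (add_div _ _ _).symm⟩
  zero_mem' := ⟨0, zero_mem O11Ring, (zero_div _).symm⟩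
  neg_mem' := by
    rintro _ ⟨w, hw, rfl⟩
    exact ⟨-w, neg_mem (show w ∈ O11Ring from hw), (neg_div _ _).symm⟩

lemma mul_mem_invDiff11 {o z : ℂ} (ho : o ∈ O11Ring) (hz : z ∈ invDiff11) :
    o * z ∈ invDiff11 := by
  obtain ⟨w, hw, rfl⟩ := hz
  exact ⟨o * w, mul_mem ho hw, (mul_div_assoc _ _ _).symm⟩

lemma conjTranspose_mul_mul_mem_invDiff11 {n : Type*} [Fintype n] {G U : Matrix n n ℂ}
    (hG : ∀ i j, G i j ∈ invDiff11) (hU : ∀ i j, U i j ∈ O11Ring) (i j : n) :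
    (Uᴴ * G * U) i j ∈ invDiff11 := by
  rw [mul_apply]
  refine sum_mem fun l _ ↦ ?_
  rw [mul_apply, Finset.sum_mul]
  refine sum_mem fun k _ ↦ ?_
  rw [conjTranspose_apply, mul_comm, ← mul_assoc]
  exact mul_mem_invDiff11 (mul_mem (hU l j) (conj_mem_O11Ring (hU k i))) (hG k l)

lemma exists_eq_intCast_of_mem_invDiff11 {z : ℂ} (hz : z ∈ invDiff11) (hz' : conj z = z) :
    ∃ n : ℤ, z = n := by
  obtain ⟨_, ⟨a, b, rfl⟩, rfl⟩ := hz
  have hb : b = -2 * a := by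
    rw [map_div₀, conj_s11, div_neg, neg_eq_iff_eq_neg, ← neg_div,
      div_left_inj' s11_ne_zero] at hz'
    simp only [map_add, map_mul, map_intCast, conj_η11] at hz'
    exact_mod_cast (by linear_combination hz' : (b : ℂ) = -2 * a)
  refine ⟨-a, ?_⟩
  rw [div_eq_iff s11_ne_zero, hb]
  push_cast
  simp only [η11]
  ring

lemma sq_add_mul_add_three_mul_sq_ne_34_35 (a b : ℤ) :
    a ^ 2 + a * b + 3 * b ^ 2 ≠ 34 ∧ a ^ 2 + a * b + 3 * b ^ 2 ≠ 35 := by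
  have h4 : (2 * a + b) ^ 2 + 11 * b ^ 2 = 4 * (a ^ 2 + a * b + 3 * b ^ 2) := by ring
  generalize 2 * a + b = c at h4
  generalize a ^ 2 + a * b + 3 * b ^ 2 = N at h4 ⊢
  rw [← not_or]
  intro hN
  have h140 : c ^ 2 + 11 * b ^ 2 ≤ 140 := by rcases hN with rfl | rfl <;> linarith
  obtain ⟨hb₁, hb₂⟩ := abs_lt_of_sq_lt_sq' (by nlinarith [sq_nonneg c] : b ^ 2 < 4 ^ 2)
    (by norm_num)
  obtain ⟨hc₁, hc₂⟩ := abs_lt_of_sq_lt_sq' (by nlinarith [sq_nonneg b] : c ^ 2 < 12 ^ 2)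
    (by norm_num)
  interval_cases b <;> interval_cases c <;> omega

lemma normSq_eq_of_mem_invDiff11 {z : ℂ} (hz : z ∈ invDiff11) (h₁ : 3 ≤ normSq z)
    (h₂ : normSq z ≤ 36 / 11) : normSq z = 3 ∨ normSq z = 36 / 11 := by
  obtain ⟨_, ⟨a, b, rfl⟩, rfl⟩ := hz
  have hs : normSq s11 = 11 := by simp [s11, normSq_apply]
  rw [map_div₀, hs, normSq_intCast_add_intCast_mul_η11] at h₁ h₂ ⊢
  obtain ⟨h₃₄, h₃₅⟩ := sq_add_mul_add_three_mul_sq_ne_34_35 a b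
  generalize a ^ 2 + a * b + 3 * b ^ 2 = N at h₁ h₂ h₃₄ h₃₅ ⊢
  have h₃₃ : 33 ≤ N := by exact_mod_cast (by linarith : (33 : ℝ) ≤ N)
  have h₃₆ : N ≤ 36 := by exact_mod_cast (by linarith : (N : ℝ) ≤ 36)
  obtain rfl | rfl : N = 33 ∨ N = 36 := by omega
  all_goals norm_num

lemma det_eq_of_isHermitian {A : Matrix (Fin 2) (Fin 2) ℂ} (hA : A.IsHermitian) :
    A.det = A 0 0 * A 1 1 - normSq (A 0 1) := by
  rw [det_fin_two, ← hA.apply 1 0, star_def, mul_conj]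

lemma det_conjTranspose_mul_mul_of_det_eq_one {n R : Type*} [Fintype n] [DecidableEq n]
    [CommRing R] [StarRing R] (G : Matrix n n R) {U : Matrix n n R} (hU : U.det = 1) :
    (Uᴴ * G * U).det = G.det := by
  simp [det_mul, det_conjTranspose, hU]

lemma le_re_conjTranspose_mul_mul_apply {n : Type*} [Fintype n] [DecidableEq n] (S : Set ℂ)
    {G U : Matrix n n ℂ} {m : ℝ}
    (hmin : ∀ w : n → ℂ, (∀ i, w i ∈ S) → w ≠ 0 → m ≤ (star w ⬝ᵥ G *ᵥ w).re)
    (hU : ∀ i j, U i j ∈ S) (hUdet : U.det ≠ 0) (j : n) : m ≤ ((Uᴴ * G * U) j j).re := by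
  have hcol : Uᵀ j ≠ 0 := fun h ↦
    hUdet (by simpa using det_eq_zero_of_row_eq_zero (A := Uᵀ) j (congrFun h))
  rw [conjTranspose_mul_mul_apply]
  exact hmin _ (fun i ↦ hU i j) hcol

lemma exists_mul_eq_one_of_det_eq_one {R : Type*} [CommRing R] (S : Subring R)
    {U : Matrix (Fin 2) (Fin 2) R} (hU : ∀ i j, U i j ∈ S) (hdet : U.det = 1) :
    ∃ V : Matrix (Fin 2) (Fin 2) R, (∀ i j, V i j ∈ S) ∧ U * V = 1 := by
  refine ⟨adjugate U, ?_, by rw [mul_adjugate, hdet, one_smul]⟩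
  rw [adjugate_fin_two]
  intro i j
  fin_cases i <;> fin_cases j <;> simp [hU]

lemma eq_of_isHermitian_of_normSq_le {A : Matrix (Fin 2) (Fin 2) ℂ} (hA : A.IsHermitian)
    (hA₁₁ : A 1 1 ∈ invDiff11) (h₀₀ : A 0 0 = 2) (h₁₁ : 2 ≤ (A 1 1).re) (hdet : A.det.re ≤ 1)
    (h₀₁ : normSq (A 0 1) ≤ 36 / 11) : A = !![2, A 0 1; conj (A 0 1), 2] := by
  obtain ⟨n, hn⟩ := exists_eq_intCast_of_mem_invDiff11 hA₁₁ (hA.apply 1 1)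
  have hn₂ : 2 ≤ n := by
    rw [hn, intCast_re] at h₁₁
    exact_mod_cast h₁₁
  have hn₃ : n < 3 := by
    have := congrArg re (det_eq_of_isHermitian hA)
    rw [h₀₀, hn] at this
    simp only [sub_re, mul_re, re_ofNat, intCast_re, im_ofNat, intCast_im, mul_zero, sub_zero,
      ofReal_re] at this
    exact_mod_cast (by linarith : (n : ℝ) < 3)
  have hA₁₁ : A 1 1 = 2 := by rw [hn, show n = 2 by omega]; norm_num
  conv_lhs => rw [eta_fin_two A]
  rw [h₀₀, hA₁₁, ← hA.apply 1 0]
  rfl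

/-- Let L be a rank-2 Hermitian ℤ[η]-lattice over K = ℚ(√−11), given by the
positive definite Hermitian Gram matrix `G` of an ℤ[η]-basis, taking values in
the inverse different (1/√−11)ℤ[η], with Hermitian minimum 2 and discriminant
d_L = det G ≤ 1.  Then after a base change by some U ∈ GL₂(ℤ[η]) the Gram
matrix becomes [[2, z],[z̄, 2]] with z ∈ (1/√−11)ℤ[η] and N(z) ∈ {3, 36/11};
in particular d_L ∈ {8/11, 1}. -/
theorem stmt11 (G : Matrix (Fin 2) (Fin 2) ℂ)
    (hGval : ∀ i j, ∃ w ∈ O11, G i j = w / s11)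
    (hG : G.PosDef)
    (hmin : IsLeast {x : ℝ | ∃ v : Fin 2 → ℂ, (∀ i, v i ∈ O11) ∧ v ≠ 0 ∧
      (star v ⬝ᵥ G.mulVec v).re = x} 2)
    (hdet : (G.det).re ≤ 1) :
    (∃ U : Matrix (Fin 2) (Fin 2) ℂ,
      (∀ i j, U i j ∈ O11) ∧
      (∃ V : Matrix (Fin 2) (Fin 2) ℂ, (∀ i j, V i j ∈ O11) ∧ U * V = 1) ∧
      ∃ z : ℂ, (∃ w ∈ O11, z = w / s11) ∧
        Uᴴ * G * U = !![2, z; (starRingEnd ℂ) z, 2] ∧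
        (Complex.normSq z = 3 ∨ Complex.normSq z = 36 / 11)) ∧
    ((G.det).re = 8 / 11 ∨ (G.det).re = 1) := by
  obtain ⟨⟨v, hvO, -, hv⟩, hmin⟩ := hmin
  replace hmin : ∀ w : Fin 2 → ℂ, (∀ i, w i ∈ O11Ring) → w ≠ 0 → 2 ≤ (star w ⬝ᵥ G *ᵥ w).re :=
    fun w hw hw₀ ↦ hmin ⟨w, hw, hw₀, rfl⟩
  have hQ : star v ⬝ᵥ G *ᵥ v = 2 :=
    Complex.ext hv (Complex.nonneg_iff.1 (hG.posSemidef.dotProduct_mulVec_nonneg v)).2.symm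
  obtain ⟨X, hX, Y, hY, hXY⟩ := exists_mul_add_mul_eq_one_of_minimal G two_pos hmin hvO hv
  obtain ⟨U, hU, hUdet, h₀₀, h₀₁⟩ :=
    exists_det_eq_one_normSq_gram_le G hvO hX hY hXY (by rw [hQ]; exact two_ne_zero)
  have hdetU := det_conjTranspose_mul_mul_of_det_eq_one G hUdet
  have hmemU := conjTranspose_mul_mul_mem_invDiff11 hGval hU
  rw [hQ] at h₀₀ h₀₁
  replace h₀₁ : normSq ((Uᴴ * G * U) 0 1) ≤ 36 / 11 := by norm_num at h₀₁; linarith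
  have hGU := eq_of_isHermitian_of_normSq_le (isHermitian_conjTranspose_mul_mul U hG.1)
    (hmemU 1 1) h₀₀ (le_re_conjTranspose_mul_mul_apply _ hmin hU (by simp [hUdet]) 1)
    (by rwa [hdetU]) h₀₁
  set z := (Uᴴ * G * U) 0 1
  have hdetz : G.det.re = 4 - normSq z := by
    rw [← hdetU, hGU, det_fin_two_of, mul_conj]
    norm_num
  have hz := normSq_eq_of_mem_invDiff11 (hmemU 0 1) (by linarith) h₀₁
  refine ⟨⟨U, hU, exists_mul_eq_one_of_det_eq_one O11Ring hU hUdet, z, hmemU 0 1, hGU, hz⟩, ?_⟩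
  rcases hz with h | h <;> [right; left] <;> rw [hdetz, h] <;> norm_num
end

section
/- Let K be an imaginary quadratic field and L a Hermitian O_K-lattice of rank m in (V, h). For a K-subspace F of V with orthogonal projection p onto F^⊥, the discriminants satisfy d_L = d_{F ∩ L} · d_{p(L)}. -/
/-!
Lift the basis `y` of `p(L)` to vectors `w` of `L`. As `x` is a basis of `F ∩ L = ker p ∩ L`,
the family `(x, w)` is an `O_K`-basis of `L`; its Gram matrix is therefore congruent to that of
`B` by a matrix whose determinant is a unit `u` of `O_K`. Since `K` is imaginary quadratic, it is
stable under conjugation and `K ∩ ℝ = ℚ`, so `|u|²` and `|u⁻¹|²` are nonnegative rational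
integers with product `1`, whence `|u|² = 1`.
Since `F` is `K`-rational, an integer multiple of each `K`-point of `F` lies in `F ∩ L`, so `x`
spans `F` over `ℂ`. Hence `w t - y t ∈ span x`, and a unitriangular change of basis turns
`(x, w)` into `(x, y)`, whose Gram matrix is block diagonal because `y ⊥ F`.
-/

open Matrix Complex
open scoped ComplexOrder

def integersIn (K : Subfield ℂ) : Subring ℂ := K.toSubring ⊓ (integralClosure ℤ ℂ).toSubring

namespace ImagQuadratic

variable {K : Subfield ℂ}

theorem exists_im_ne_zero (himag : ¬ (K : Set ℂ) ⊆ Set.range Complex.ofReal) :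
    ∃ w ∈ K, w.im ≠ 0 := by
  obtain ⟨w, hwK, hw⟩ := Set.not_subset.mp himag
  exact ⟨w, hwK, fun h0 => hw ⟨w.re, Complex.ext rfl h0.symm⟩⟩

theorem exists_rat_add_rat_mul_eq (hdeg : Module.finrank ℚ K = 2) {w : ℂ} (hw : w ∈ K)
    (hwim : w.im ≠ 0) {z : ℂ} (hz : z ∈ K) : ∃ a b : ℚ, (a : ℂ) + b * w = z := by
  have : FiniteDimensional ℚ K := Module.finite_of_finrank_eq_succ hdeg
  set W : K := ⟨w, hw⟩
  have hind : LinearIndependent ℚ ![1, W] := by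
    refine LinearIndependent.pair_iff.mpr fun s t hst => ?_
    have him := congrArg (fun u : K => (u : ℂ).im) hst
    have hre := congrArg (fun u : K => (u : ℂ).re) hst
    simp [W, Rat.smul_def, hwim] at him
    subst him
    simpa [Rat.smul_def] using hre
  have htop : Submodule.span ℚ (Set.range ![1, W]) = ⊤ :=
    Submodule.eq_top_of_finrank_eq (by rw [finrank_span_eq_card hind, hdeg]; simp)
  have hzspan : (⟨z, hz⟩ : K) ∈ Submodule.span ℚ {1, W} := by
    rw [← Matrix.range_cons_cons_empty, htop]; trivial
  obtain ⟨a, b, hab⟩ := Submodule.mem_span_pair.mp hzspan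
  refine ⟨a, b, ?_⟩
  simpa [W, Rat.smul_def] using congrArg ((↑) : K → ℂ) hab

theorem star_mem (hdeg : Module.finrank ℚ K = 2)
    (himag : ¬ (K : Set ℂ) ⊆ Set.range Complex.ofReal) {z : ℂ} (hz : z ∈ K) : star z ∈ K := by
  obtain ⟨w, hw, hwim⟩ := exists_im_ne_zero himag
  obtain ⟨a, b, hab⟩ := exists_rat_add_rat_mul_eq hdeg hw hwim (pow_mem hw 2)
  -- `w` and `star w` are the two roots of `X ^ 2 - b * X - a`
  have hwconj : star w = b - w := by
    have hab' := congrArg star hab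
    simp only [star_add, star_mul', star_pow, star_ratCast] at hab'
    have hne : w - star w ≠ 0 := by
      rw [sub_ne_zero]; intro h; apply hwim
      have := congrArg Complex.im h
      simp at this
      linarith
    have : (w - star w) * (star w - (b - w)) = 0 := by linear_combination hab' - hab
    exact sub_eq_zero.mp ((mul_eq_zero.mp this).resolve_left hne)
  obtain ⟨c, d, rfl⟩ := exists_rat_add_rat_mul_eq hdeg hw hwim hz
  simp only [star_add, star_mul', star_ratCast, hwconj]
  exact add_mem (SubfieldClass.ratCast_mem K c)
    (mul_mem (SubfieldClass.ratCast_mem K d) (sub_mem (SubfieldClass.ratCast_mem K b) hw))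

theorem exists_ratCast_eq_of_im_eq_zero (hdeg : Module.finrank ℚ K = 2)
    (himag : ¬ (K : Set ℂ) ⊆ Set.range Complex.ofReal) {z : ℂ} (hz : z ∈ K) (hzim : z.im = 0) :
    ∃ q : ℚ, (q : ℂ) = z := by
  obtain ⟨w, hw, hwim⟩ := exists_im_ne_zero himag
  obtain ⟨a, b, rfl⟩ := exists_rat_add_rat_mul_eq hdeg hw hwim hz
  have hb : b = 0 := by simpa [hwim] using hzim
  exact ⟨a, by simp [hb]⟩

theorem exists_intCast_eq_star_mul_self (hdeg : Module.finrank ℚ K = 2)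
    (himag : ¬ (K : Set ℂ) ⊆ Set.range Complex.ofReal) {z : ℂ} (hz : z ∈ integersIn K) :
    ∃ m : ℤ, (m : ℂ) = star z * z := by
  obtain ⟨hzK, hzint⟩ := hz
  obtain ⟨q, hq⟩ := exists_ratCast_eq_of_im_eq_zero hdeg himag
    (mul_mem (star_mem hdeg himag hzK) hzK) (by simp [mul_comm])
  have hqint : IsIntegral ℤ (q : ℚ) := by
    rw [← isIntegral_algebraMap_iff (algebraMap ℚ ℂ).injective, eq_ratCast, hq]
    exact (hzint.map (starRingEnd ℂ).toIntAlgHom).mul hzint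
  obtain ⟨m, rfl⟩ := IsIntegrallyClosed.isIntegral_iff.mp hqint
  exact ⟨m, by simpa using hq⟩

theorem star_mul_self_units_eq_one (hdeg : Module.finrank ℚ K = 2)
    (himag : ¬ (K : Set ℂ) ⊆ Set.range Complex.ofReal) (w : (integersIn K)ˣ) :
    star ((w : integersIn K) : ℂ) * (w : integersIn K) = 1 := by
  set u : ℂ := ((w : integersIn K) : ℂ)
  set v : ℂ := (((w⁻¹ : (integersIn K)ˣ) : integersIn K) : ℂ)
  have huv : u * v = 1 := congrArg Subtype.val w.mul_inv
  obtain ⟨m, hm⟩ := exists_intCast_eq_star_mul_self hdeg himag w.1.2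
  obtain ⟨m', hm'⟩ := exists_intCast_eq_star_mul_self hdeg himag w⁻¹.1.2
  have hm0 : 0 ≤ m := by
    have : ((m : ℝ) : ℂ) = Complex.normSq u := by
      rw [Complex.normSq_eq_conj_mul_self]; exact_mod_cast hm
    exact_mod_cast (Complex.ofReal_injective this) ▸ Complex.normSq_nonneg u
  have hmm' : m * m' = 1 := by
    have : ((m * m' : ℤ) : ℂ) = 1 := by
      push_cast
      rw [hm, hm', show star u * u * (star v * v) = star (u * v) * (u * v) by
        rw [star_mul']; ring, huv, star_one, one_mul]
    exact_mod_cast this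
  rw [← hm, Int.eq_one_of_mul_eq_one_right hm0 hmm', Int.cast_one]

end ImagQuadratic

section Lattice
variable {ι κ : Type*}

theorem exists_forall_mem_and_eq_sum_iff {R V : Type*} [CommRing R] [AddCommGroup V] [Module R V]
    [Fintype ι] (S : Subring R) {v : ι → V} {u : V} :
    (∃ c : ι → R, (∀ i, c i ∈ S) ∧ u = ∑ i, c i • v i) ↔ u ∈ Submodule.span S (Set.range v) := by
  rw [Submodule.mem_span_range_iff_exists_fun]
  constructor
  · rintro ⟨c, hcS, rfl⟩
    exact ⟨fun i => ⟨c i, hcS i⟩, rfl⟩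
  · rintro ⟨c, rfl⟩
    exact ⟨fun i => c i, fun i => (c i).2, rfl⟩

variable {R M N : Type*} [Ring R] [AddCommGroup M] [AddCommGroup N] [Module R M] [Module R N]

theorem span_range_sum_elim_eq (f : M →ₗ[R] N) {L : Submodule R M} {x : ι → M} {w : κ → M}
    (hx : ∀ i, x i ∈ L) (hw : ∀ k, w k ∈ L)
    (hker : ∀ v ∈ L, f v = 0 → v ∈ Submodule.span R (Set.range x))
    (hf : ∀ v ∈ L, f v ∈ Submodule.span R (Set.range (f ∘ w))) :
    Submodule.span R (Set.range (Sum.elim x w)) = L := by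
  rw [Set.Sum.elim_range, Submodule.span_union]
  refine le_antisymm (sup_le ?_ ?_) fun v hv => ?_
  · exact Submodule.span_le.mpr (Set.range_subset_iff.mpr hx)
  · exact Submodule.span_le.mpr (Set.range_subset_iff.mpr hw)
  have hwL : Submodule.span R (Set.range w) ≤ L :=
    Submodule.span_le.mpr (Set.range_subset_iff.mpr hw)
  obtain ⟨u, hu, hfu⟩ : ∃ u ∈ Submodule.span R (Set.range w), f u = f v := by
    simpa [Set.range_comp, ← Submodule.map_span] using hf v hv
  have hvu : v - u ∈ Submodule.span R (Set.range x) :=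
    hker _ (L.sub_mem hv (hwL hu)) (by rw [map_sub, hfu, sub_self])
  simpa using Submodule.add_mem_sup hvu hu

theorem linearIndependent_sum_elim_of_map_eq_zero (f : M →ₗ[R] N) {x : ι → M} {w : κ → M}
    (hx : LinearIndependent R x) (hfx : ∀ i, f (x i) = 0) (hw : LinearIndependent R (f ∘ w)) :
    LinearIndependent R (Sum.elim x w) :=
  hx.sum_type (hw.of_comp f) <| (Submodule.range_ker_disjoint hw).symm.mono_left <|
    Submodule.span_le.mpr (Set.range_subset_iff.mpr hfx)

end Lattice

theorem map_eq_zero_iff_mem_of_orthogonal {m 𝕜 : Type*} [Fintype m] [RCLike 𝕜]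
    {h : Matrix m m 𝕜} (hh : h.PosDef) {F : Submodule 𝕜 (m → 𝕜)} {p : (m → 𝕜) → m → 𝕜}
    (hp1 : ∀ v, v - p v ∈ F) (hp2 : ∀ v, ∀ u ∈ F, star u ⬝ᵥ h *ᵥ p v = 0) (v : m → 𝕜) :
    p v = 0 ↔ v ∈ F := by
  refine ⟨fun hv => by simpa [hv] using hp1 v, fun hv => ?_⟩
  have hpv : p v ∈ F := by simpa using F.sub_mem hv (hp1 v)
  by_contra hne
  exact (hh.dotProduct_mulVec_pos hne).ne' (hp2 v _ hpv)

theorem exists_forall_mem_and_eq_sum_of_forall_mem {ι L : Type*} [Fintype ι] [DecidableEq ι]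
    [Field L] (K : Subfield L) {B : ι → ι → L} (hBK : ∀ i j, B i j ∈ K)
    (hB : LinearIndependent L B) {v : ι → L} (hv : ∀ j, v j ∈ K) :
    ∃ c : ι → L, (∀ i, c i ∈ K) ∧ v = ∑ i, c i • B i := by
  set BK : Matrix ι ι K := of fun i j => ⟨B i j, hBK i j⟩
  have hmap : K.subtype.mapMatrix BK = of B := rfl
  have hdet : IsUnit BK.det := by
    refine isUnit_iff_ne_zero.mpr fun h0 => ?_
    have := (isUnit_iff_isUnit_det _).mp (linearIndependent_rows_iff_isUnit (A := of B) |>.mp hB)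
    rw [← hmap, ← RingHom.map_det, h0, map_zero] at this
    exact not_isUnit_zero this
  set c : ι → K := (fun j => ⟨v j, hv j⟩) ᵥ* BK⁻¹
  refine ⟨fun i => c i, fun i => (c i).2, funext fun j => ?_⟩
  have hc : c ᵥ* BK = fun j => ⟨v j, hv j⟩ := by
    rw [vecMul_vecMul, nonsing_inv_mul _ hdet, vecMul_one]
  have := congrArg (fun u => K.subtype (u j)) hc
  simp only [vecMul, dotProduct, map_sum, map_mul] at this
  simpa [Finset.sum_apply, BK] using this.symm

theorem exists_intCast_smul_mem_span {ι : Type*} [Fintype ι] [DecidableEq ι] {K : Subfield ℂ}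
    [FiniteDimensional ℚ K] {B : ι → ι → ℂ} (hBK : ∀ i j, B i j ∈ K)
    (hB : LinearIndependent ℂ B) {v : ι → ℂ} (hv : ∀ j, v j ∈ K) :
    ∃ N : ℤ, N ≠ 0 ∧ (N : ℂ) • v ∈ Submodule.span (integersIn K) (Set.range B) := by
  obtain ⟨c, hcK, rfl⟩ := exists_forall_mem_and_eq_sum_of_forall_mem K hBK hB hv
  obtain ⟨N, hN, hNc⟩ := exists_integral_multiples ℤ ℚ (L := K)
    (Finset.univ.image fun i => (⟨c i, hcK i⟩ : K))
  refine ⟨N, hN, (exists_forall_mem_and_eq_sum_iff _).mp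
    ⟨fun i => N * c i, fun i => ⟨mul_mem (intCast_mem K N) (hcK i), ?_⟩, ?_⟩⟩
  · have := hNc _ (Finset.mem_image_of_mem _ (Finset.mem_univ i))
    simpa [zsmul_eq_mul, mem_integralClosure_iff] using this.map K.subtype.toIntAlgHom
  · simp [Finset.smul_sum, smul_smul]

theorem le_span_range_of_eq_span_rational {ι κ : Type*} [Fintype ι] [DecidableEq ι]
    {K : Subfield ℂ} [FiniteDimensional ℚ K] {B : ι → ι → ℂ} (hBK : ∀ i j, B i j ∈ K)
    (hB : LinearIndependent ℂ B) {F : Submodule ℂ (ι → ℂ)}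
    (hFK : F = Submodule.span ℂ (F ∩ {v | ∀ i, v i ∈ K})) {x : κ → ι → ℂ} (hx : ∀ v ∈ Submodule.span (integersIn K) (Set.range B), v ∈ F →
      v ∈ Submodule.span (integersIn K) (Set.range x)) :
    F ≤ Submodule.span ℂ (Set.range x) := by
  rw [hFK, Submodule.span_le]
  rintro v ⟨hvF, hvK⟩
  obtain ⟨N, hN, hNv⟩ := exists_intCast_smul_mem_span hBK hB hvK
  refine (Submodule.smul_mem_iff _ (Int.cast_ne_zero.mpr hN : (N : ℂ) ≠ 0)).mp ?_
  exact Submodule.span_le_restrictScalars (integersIn K) ℂ _ (hx _ hNv (F.smul_mem _ hvF))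

theorem of_eq_mul_of_forall_eq_sum {R m ι κ : Type*} [CommRing R] [Fintype κ] {v : κ → m → R}
    {z : ι → m → R} {M : Matrix ι κ R} (hz : ∀ i, z i = ∑ k, M i k • v k) : of z = M * of v := by
  ext i a
  simp [hz i, mul_apply, Finset.sum_apply]

section Gram

variable {R : Type*} [CommRing R] [StarRing R] {m ι κ : Type*} [Fintype m]

def gramMatrix (h : Matrix m m R) (v : ι → m → R) : Matrix ι ι R :=
  Matrix.of fun i j => star (v i) ⬝ᵥ h *ᵥ v j

theorem gramMatrix_eq_mul (h : Matrix m m R) (v : ι → m → R) :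
    gramMatrix h v = (of v)ᵀᴴ * h * (of v)ᵀ := by
  ext i j
  simp only [gramMatrix, of_apply, mul_apply, conjTranspose_apply, transpose_apply, dotProduct,
    mulVec, Pi.star_apply, Finset.mul_sum, Finset.sum_mul]
  rw [Finset.sum_comm]
  exact Finset.sum_congr rfl fun _ _ => Finset.sum_congr rfl fun _ _ => by ring

theorem gramMatrix_of_eq_sum [Fintype κ] (h : Matrix m m R) {v : κ → m → R} {z : ι → m → R}
    (M : Matrix ι κ R) (hz : ∀ i, z i = ∑ k, M i k • v k) :
    gramMatrix h z = Mᵀᴴ * gramMatrix h v * Mᵀ := by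
  rw [gramMatrix_eq_mul, gramMatrix_eq_mul, of_eq_mul_of_forall_eq_sum hz, transpose_mul,
    conjTranspose_mul]
  simp only [Matrix.mul_assoc]

theorem det_gramMatrix_of_eq_sum [Fintype ι] [DecidableEq ι] (h : Matrix m m R) {v z : ι → m → R}
    (M : Matrix ι ι R) (hz : ∀ i, z i = ∑ k, M i k • v k) :
    (gramMatrix h z).det = star M.det * (gramMatrix h v).det * M.det := by
  rw [gramMatrix_of_eq_sum h M hz, det_mul, det_mul, det_conjTranspose, det_transpose]

theorem gramMatrix_isHermitian {h : Matrix m m R} (hh : h.IsHermitian) (v : ι → m → R) :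
    (gramMatrix h v).IsHermitian := by
  ext i j
  rw [conjTranspose_apply, gramMatrix, of_apply, of_apply, star_dotProduct, star_mulVec, star_star,
    hh.eq, dotProduct_mulVec]

theorem gramMatrix_sum_elim_of_orthogonal {h : Matrix m m R} (hh : h.IsHermitian)
    {x : ι → m → R} {y : κ → m → R} (hxy : ∀ i j, star (x i) ⬝ᵥ h *ᵥ y j = 0) :
    gramMatrix h (Sum.elim x y) = fromBlocks (gramMatrix h x) 0 0 (gramMatrix h y) := by
  ext (i | i) (j | j)
  · rfl
  · exact hxy i j
  · rw [← (gramMatrix_isHermitian hh _).apply]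
    simp [gramMatrix, hxy]
  · rfl

theorem det_gramMatrix_sum_elim [Fintype ι] [Fintype κ] [DecidableEq ι] [DecidableEq κ]
    {h : Matrix m m R} (hh : h.IsHermitian) {x : ι → m → R} {y w : κ → m → R}
    (hxy : ∀ i j, star (x i) ⬝ᵥ h *ᵥ y j = 0)
    (hw : ∀ t, w t - y t ∈ Submodule.span R (Set.range x)) :
    (gramMatrix h (Sum.elim x w)).det = (gramMatrix h x).det * (gramMatrix h y).det := by
  choose A hA using fun t => (Submodule.mem_span_range_iff_exists_fun R).mp (hw t)
  have hQ : ∀ i, Sum.elim x w i = ∑ k, fromBlocks 1 0 (of A) 1 i k • Sum.elim x y k := by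
    rintro (t | t) <;> simp [Fintype.sum_sum_type, one_apply, ite_smul, hA]
  rw [det_gramMatrix_of_eq_sum h _ hQ, gramMatrix_sum_elim_of_orthogonal hh hxy]
  simp

end Gram

section GramDet

variable {R : Type*} [Field R] [StarRing R] {m ι κ : Type*} [Fintype m]

theorem det_gramMatrix_eq_of_mem_span [Fintype ι] [DecidableEq ι] {S : Subring R}
    (hS : ∀ u : Sˣ, star (u : R) * u = 1) (h : Matrix m m R) {v z : ι → m → R}
    (hv : LinearIndependent R v) (hz : ∀ i, z i ∈ Submodule.span S (Set.range v))
    (hvz : ∀ i, v i ∈ Submodule.span S (Set.range z)) :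
    (gramMatrix h z).det = (gramMatrix h v).det := by
  choose M hM using fun i => (Submodule.mem_span_range_iff_exists_fun S).mp (hz i)
  choose N hN using fun i => (Submodule.mem_span_range_iff_exists_fun S).mp (hvz i)
  have hzM : ∀ i, z i = ∑ k, S.subtype.mapMatrix (of M) i k • v k := fun i => (hM i).symm
  have hvN : ∀ i, v i = ∑ k, S.subtype.mapMatrix (of N) i k • z k := fun i => (hN i).symm
  have hNM : of N * of M = 1 := by
    apply map_injective (f := S.subtype) Subtype.val_injective
    change S.subtype.mapMatrix (of N * of M) = S.subtype.mapMatrix 1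
    rw [map_mul, map_one]
    have hV : S.subtype.mapMatrix (of N) * S.subtype.mapMatrix (of M) * of v =
        (1 : Matrix ι ι R) * of v := by
      rw [Matrix.mul_assoc, ← of_eq_mul_of_forall_eq_sum hzM, ← of_eq_mul_of_forall_eq_sum hvN,
        Matrix.one_mul]
    ext i l
    exact congrFun (vecMul_injective_iff.mpr hv (congrFun hV i)) l
  have hMN : (of M).det * (of N).det = 1 := by rw [← det_mul, det_mul_comm, hNM, det_one]
  have hunit := hS (Units.mkOfMulEqOne _ _ hMN)
  rw [det_gramMatrix_of_eq_sum h _ hzM, ← RingHom.map_det, mul_right_comm]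
  simpa using congrArg (· * (gramMatrix h v).det) hunit

theorem det_gramMatrix_eq_of_span_eq [Fintype ι] [Fintype κ] [DecidableEq ι] [DecidableEq κ]
    {S : Subring R} (hS : ∀ u : Sˣ, star (u : R) * u = 1) (h : Matrix m m R)
    {v : ι → m → R} {z : κ → m → R}
    (hv : LinearIndependent R v) (hz : LinearIndependent R z)
    (hspan : Submodule.span S (Set.range z) = Submodule.span S (Set.range v)) :
    (gramMatrix h z).det = (gramMatrix h v).det := by
  have hcard : Fintype.card κ = Fintype.card ι := by
    have : Submodule.span R (Set.range z) = Submodule.span R (Set.range v) := by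
      rw [← Submodule.span_span_of_tower S, hspan, Submodule.span_span_of_tower]
    rw [← finrank_span_eq_card hz, ← finrank_span_eq_card hv, this]
  set e := Fintype.equivOfCardEq hcard
  have hspan' : Submodule.span S (Set.range (z ∘ e.symm)) = Submodule.span S (Set.range v) := by
    rw [EquivLike.range_comp, hspan]
  calc (gramMatrix h z).det = (gramMatrix h (z ∘ e.symm)).det :=
        (det_submatrix_equiv_self e.symm _).symm
    _ = (gramMatrix h v).det :=
        det_gramMatrix_eq_of_mem_span hS h hv
          (fun i => hspan ▸ Submodule.subset_span ⟨e.symm i, rfl⟩)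
          (fun i => hspan' ▸ Submodule.subset_span ⟨i, rfl⟩)

end GramDet

theorem im_det_gramMatrix {m ι : Type*} [Fintype m] [Fintype ι] [DecidableEq ι]
    {h : Matrix m m ℂ} (hh : h.IsHermitian) (v : ι → m → ℂ) : (gramMatrix h v).det.im = 0 := by
  have : star (gramMatrix h v).det = (gramMatrix h v).det := by
    rw [← det_conjTranspose, (gramMatrix_isHermitian hh v).eq]
  exact Complex.conj_eq_iff_im.mp this

theorem stmt13_general (K : Subfield ℂ)
    (hdeg : Module.finrank ℚ K = 2)
    (himag : ¬ (K : Set ℂ) ⊆ Set.range (Complex.ofReal))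
    (O : Set ℂ) (hO : O = {z : ℂ | z ∈ K ∧ IsIntegral ℤ z})
    (n : ℕ) (h : Matrix (Fin n) (Fin n) ℂ) (hh : h.PosDef)
    (B : Fin n → (Fin n → ℂ)) (hBK : ∀ i j, B i j ∈ K) (hB : LinearIndependent ℂ B)
    (L : Set (Fin n → ℂ))
    (hL : L = {v | ∃ c : Fin n → ℂ, (∀ i, c i ∈ O) ∧ v = ∑ i, c i • B i})
    (F : Submodule ℂ (Fin n → ℂ))
    (hFK : F = Submodule.span ℂ ((F : Set (Fin n → ℂ)) ∩ {v | ∀ i, v i ∈ K}))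
    (p : (Fin n → ℂ) →ₗ[ℂ] (Fin n → ℂ))
    (hp1 : ∀ v, v - p v ∈ F)
    (hp2 : ∀ v, ∀ u ∈ F, star u ⬝ᵥ h.mulVec (p v) = 0)
    (r s : ℕ)
    (x : Fin r → (Fin n → ℂ))
    (hxmem : ∀ t, x t ∈ L ∧ x t ∈ F)
    (hxind : LinearIndependent ℂ x)
    (hxspan : ∀ v ∈ L, v ∈ F →
      ∃ c : Fin r → ℂ, (∀ t, c t ∈ O) ∧ v = ∑ t, c t • x t)
    (y : Fin s → (Fin n → ℂ))
    (hymem : ∀ t, ∃ w ∈ L, y t = p w)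
    (hyind : LinearIndependent ℂ y)
    (hyspan : ∀ w ∈ L,
      ∃ c : Fin s → ℂ, (∀ t, c t ∈ O) ∧ p w = ∑ t, c t • y t) :
    ((Matrix.of fun i j => star (B i) ⬝ᵥ h.mulVec (B j)).det).re =
      ((Matrix.of fun i j => star (x i) ⬝ᵥ h.mulVec (x j)).det).re *
        ((Matrix.of fun i j => star (y i) ⬝ᵥ h.mulVec (y j)).det).re := by
  classical
  have : FiniteDimensional ℚ K := Module.finite_of_finrank_eq_succ hdeg
  obtain rfl : O = integersIn K := hO
  obtain rfl : L = Submodule.span (integersIn K) (Set.range B) :=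
    hL.trans (Set.ext fun v => exists_forall_mem_and_eq_sum_iff _)
  simp only [SetLike.mem_coe, exists_forall_mem_and_eq_sum_iff] at hxmem hxspan hymem hyspan
  have hker := map_eq_zero_iff_mem_of_orthogonal hh hp1 hp2
  choose w hwL hyw using hymem
  have hpw : ⇑p ∘ w = y := funext fun t => (hyw t).symm
  have hFx := le_span_range_of_eq_span_rational hBK hB hFK hxspan
  have hspan := span_range_sum_elim_eq (p.restrictScalars (integersIn K)) (fun t => (hxmem t).1)
    hwL (fun v hv hpv => hxspan v hv ((hker v).mp hpv)) (fun v hv => hpw ▸ hyspan v hv)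
  have hind := linearIndependent_sum_elim_of_map_eq_zero p hxind
    (fun t => (hker _).mpr (hxmem t).2) (hpw ▸ hyind)
  have hdet : (gramMatrix h B).det = (gramMatrix h x).det * (gramMatrix h y).det := by
    rw [← det_gramMatrix_eq_of_span_eq (ImagQuadratic.star_mul_self_units_eq_one hdeg himag) h
      hB hind hspan]
    refine det_gramMatrix_sum_elim hh.1 (fun i j => ?_) (fun t => hFx ?_)
    · rw [hyw j]; exact hp2 _ _ (hxmem i).2
    · simpa [hyw t] using hp1 (w t)
  change (gramMatrix h B).det.re = (gramMatrix h x).det.re * (gramMatrix h y).det.re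
  rw [hdet, Complex.mul_re, im_det_gramMatrix hh.1 y, mul_zero, sub_zero]

/-- Let K be an imaginary quadratic field (degree-2 subfield of ℂ, not real) with
ring of integers `O`.  Let `(V, h)` be the Hermitian space `V = Fin n → ℂ` with
positive definite Hermitian form given by the matrix `h` (entries in K), and let
`L` be the (free) Hermitian O-lattice spanned over O by the basis `B` (with
entries in K).  Let `F` be a K-subspace of V (a ℂ-subspace spanned by its
K-points) and `p` the orthogonal projection onto F^⊥ (characterized by:
v − p v ∈ F and p v ⊥ F for all v).  If `x` is an O-basis of `F ∩ L` and `y` an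
O-basis of `p(L)`, then the discriminants (Gram determinants) satisfy
d_L = d_{F ∩ L} · d_{p(L)}. -/
theorem stmt13 (K : Subfield ℂ)
    (hdeg : Module.finrank ℚ K = 2)
    (himag : ¬ (K : Set ℂ) ⊆ Set.range (Complex.ofReal))
    (O : Set ℂ) (hO : O = {z : ℂ | z ∈ K ∧ IsIntegral ℤ z})
    (n : ℕ) (h : Matrix (Fin n) (Fin n) ℂ) (hhK : ∀ i j, h i j ∈ K) (hh : h.PosDef)
    (B : Fin n → (Fin n → ℂ)) (hBK : ∀ i j, B i j ∈ K) (hB : LinearIndependent ℂ B)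
    (L : Set (Fin n → ℂ))
    (hL : L = {v | ∃ c : Fin n → ℂ, (∀ i, c i ∈ O) ∧ v = ∑ i, c i • B i})
    (F : Submodule ℂ (Fin n → ℂ))
    (hFK : F = Submodule.span ℂ ((F : Set (Fin n → ℂ)) ∩ {v | ∀ i, v i ∈ K}))
    (p : (Fin n → ℂ) →ₗ[ℂ] (Fin n → ℂ))
    (hp1 : ∀ v, v - p v ∈ F)
    (hp2 : ∀ v, ∀ u ∈ F, star u ⬝ᵥ h.mulVec (p v) = 0)
    (r s : ℕ)
    (x : Fin r → (Fin n → ℂ))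
    (hxmem : ∀ t, x t ∈ L ∧ x t ∈ F)
    (hxind : LinearIndependent ℂ x)
    (hxspan : ∀ v ∈ L, v ∈ F →
      ∃ c : Fin r → ℂ, (∀ t, c t ∈ O) ∧ v = ∑ t, c t • x t)
    (y : Fin s → (Fin n → ℂ))
    (hymem : ∀ t, ∃ w ∈ L, y t = p w)
    (hyind : LinearIndependent ℂ y)
    (hyspan : ∀ w ∈ L,
      ∃ c : Fin s → ℂ, (∀ t, c t ∈ O) ∧ p w = ∑ t, c t • y t) :
    ((Matrix.of fun i j => star (B i) ⬝ᵥ h.mulVec (B j)).det).re =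
      ((Matrix.of fun i j => star (x i) ⬝ᵥ h.mulVec (x j)).det).re *
        ((Matrix.of fun i j => star (y i) ⬝ᵥ h.mulVec (y j)).det).re :=
  stmt13_general K hdeg himag O hO n h hh B hBK hB L hL F hFK p hp1 hp2 r s x hxmem hxind hxspan y
    hymem hyind hyspan
end
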